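/- arXiv:1904.06715 — 9 statements merged into one kernel-verified Lean document; each statement's English description precedes it below -/
import Mathlib

section
/- Let A be the adjacency matrix of a simple undirected graph G on n vertices, let 3 ≤ k ≤ n, let m ∈ ℕ^k with m_i ≥ 1 for all i and Σ_{i=1}^k m_i = n, and let 1 ≤ r ≤ k−2. If min over all partition matrices X ∈ P_m of (1/2)⟨A, X B_{r,k} Xᵀ⟩ is strictly positive (equivalently, min over all n×n permutation matrices P of (1/2)⟨Pᵀ A P, X̄ B_{r,k} X̄ᵀ⟩ > 0), then bdw(A) > min{ m_2 + … + m_{r+1}, m_3 + … + m_{r+2}, …, m_{k−r} + … + m_{k−1} }. -/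
open Matrix Finset

attribute [local instance] Classical.propDecidable

noncomputable section

/-- Trace inner product `⟨A,B⟩ = trace(Aᵀ B)`. -/
def traceInner {n : ℕ} (A B : Matrix (Fin n) (Fin n) ℝ) : ℝ :=
  Matrix.trace (Aᵀ * B)

/-- `A` is the adjacency matrix of a simple undirected graph:
symmetric 0–1 matrix with zero diagonal. -/
def IsAdjacency {n : ℕ} (A : Matrix (Fin n) (Fin n) ℝ) : Prop :=
  (∀ i j, A i j = 0 ∨ A i j = 1) ∧ (∀ i j, A i j = A j i) ∧ ∀ i, A i i = 0

/-- Bandwidth of the graph with adjacency matrix `A` under the labeling `φ`. -/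
def bdwLabel {n : ℕ} (A : Matrix (Fin n) (Fin n) ℝ) (φ : Equiv.Perm (Fin n)) : ℕ :=
  Finset.sup Finset.univ fun p : Fin n × Fin n =>
    if A p.1 p.2 ≠ 0 then (((φ p.1 : ℕ) : ℤ) - ((φ p.2 : ℕ) : ℤ)).natAbs else 0

/-- Bandwidth of the graph with adjacency matrix `A`:
minimum over all labelings. -/
def bdw {n : ℕ} (A : Matrix (Fin n) (Fin n) ℝ) : ℕ :=
  ⨅ φ : Equiv.Perm (Fin n), bdwLabel A φ

/-- `n × k` partition matrices for block sizes `m 0, …, m (k-1)`. -/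
def IsPartitionMatrix (n k : ℕ) (m : ℕ → ℕ) (X : Matrix (Fin n) (Fin k) ℝ) : Prop :=
  (∀ i j, X i j = 0 ∨ X i j = 1) ∧ (∀ i, ∑ j, X i j = 1) ∧
  ∀ j : Fin k, ∑ i, X i j = (m (j : ℕ) : ℝ)

/-- The matrix `B_{r,k}`, with `(B_{r,k})_{uv} = 1` iff `|u - v| > r`. -/
def Bmat (k r : ℕ) : Matrix (Fin k) (Fin k) ℝ :=
  Matrix.of fun u v : Fin k =>
    if (r : ℤ) < |((u : ℕ) : ℤ) - ((v : ℕ) : ℤ)| then 1 else 0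

/-- The basic partition matrix `X̄`: the first `m 0` vertices in block `0`,
the next `m 1` vertices in block `1`, and so on. -/
def basicPartition (n k : ℕ) (m : ℕ → ℕ) : Matrix (Fin n) (Fin k) ℝ :=
  Matrix.of fun (i : Fin n) (j : Fin k) =>
    if (∑ l ∈ Finset.range (j : ℕ), m l) ≤ (i : ℕ) ∧
        (i : ℕ) < ∑ l ∈ Finset.range ((j : ℕ) + 1), m l then 1 else 0

/-- Permutation matrix of a permutation `σ`. -/
def permMatrix {n : ℕ} (σ : Equiv.Perm (Fin n)) : Matrix (Fin n) (Fin n) ℝ :=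
  Matrix.of fun i j => if σ i = j then 1 else 0

/-!
Take a labeling `φ` of minimal width `b` and suppose `b` is at most every window sum
`m_t + ⋯ + m_{t+r-1}`. Cut the labels `0, …, n-1` into consecutive blocks of sizes
`m_0, …, m_{k-1}` and pull the blocks back along `φ`: this is a partition matrix. Between two
blocks more than `r` apart lie `r` whole blocks, so their labels differ by more than `b`, and no
edge joins them. Hence every edge lies where `B_{r,k}` vanishes, and the objective is `0`.
-/

lemma sum_range_le_sum_range {M : Type*} [AddCommMonoid M] [Preorder M]
    [CanonicallyOrderedAdd M] (f : ℕ → M) {a b : ℕ} (h : a ≤ b) :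
    ∑ l ∈ range a, f l ≤ ∑ l ∈ range b, f l :=
  sum_le_sum_of_subset (range_subset_range.mpr h)

lemma sum_range_ite_mem_Ico_eq_one {S : ℕ → ℕ} (hS : Monotone S) {k p : ℕ} (h0 : S 0 ≤ p)
    (hp : p < S k) : ∑ j ∈ range k, (if S j ≤ p ∧ p < S (j + 1) then (1 : ℝ) else 0) = 1 := by
  have hterm : ∀ j ∈ range k, (if S j ≤ p ∧ p < S (j + 1) then (1 : ℝ) else 0) =
      (if S j ≤ p then 1 else 0) - (if S (j + 1) ≤ p then 1 else 0) := by
    intro j _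
    have : S j ≤ S (j + 1) := hS (Nat.le_succ j)
    split_ifs <;> norm_num <;> omega
  rw [sum_congr rfl hterm, sum_range_sub' (fun j => if S j ≤ p then (1 : ℝ) else 0)]
  simp [h0, not_le.mpr hp]

lemma card_range_filter_mem_Ico {a b n : ℕ} (hb : b ≤ n) :
    #{p ∈ range n | a ≤ p ∧ p < b} = b - a := by
  rw [← Nat.card_Ico a b]
  congr 1
  ext p
  simp only [mem_filter, mem_range, mem_Ico]
  omega

lemma isPartitionMatrix_basicPartition {n k : ℕ} {m : ℕ → ℕ}
    (hsum : ∑ i ∈ range k, m i = n) : IsPartitionMatrix n k m (basicPartition n k m) := by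
  refine ⟨fun i j => ?_, fun i => ?_, fun j => ?_⟩
  · simp only [basicPartition, of_apply]; split_ifs <;> simp
  · simp only [basicPartition, of_apply]
    rw [Fin.sum_univ_eq_sum_range (fun j => if ∑ l ∈ range j, m l ≤ (i : ℕ) ∧
      (i : ℕ) < ∑ l ∈ range (j + 1), m l then (1 : ℝ) else 0)]
    exact sum_range_ite_mem_Ico_eq_one (fun _ _ => sum_range_le_sum_range m) (by simp)
      (hsum ▸ i.isLt)
  · have hj : ∑ l ∈ range (j + 1), m l ≤ n := hsum ▸ sum_range_le_sum_range m j.isLt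
    simp only [basicPartition, of_apply]
    rw [Fin.sum_univ_eq_sum_range (fun p => if ∑ l ∈ range j, m l ≤ p ∧
      p < ∑ l ∈ range (j + 1), m l then (1 : ℝ) else 0), sum_boole, card_range_filter_mem_Ico hj,
      sum_range_succ]
    simp

lemma IsPartitionMatrix.submatrix_perm {n k : ℕ} {m : ℕ → ℕ} {X : Matrix (Fin n) (Fin k) ℝ}
    (hX : IsPartitionMatrix n k m X) (σ : Equiv.Perm (Fin n)) :
    IsPartitionMatrix n k m (X.submatrix σ id) :=
  ⟨fun i j => hX.1 (σ i) j, fun i => hX.2.1 (σ i),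
    fun j => (Equiv.sum_comp σ (X · j)).trans (hX.2.2 j)⟩

lemma traceInner_mul_mul_transpose_eq_zero {n k : ℕ} (A : Matrix (Fin n) (Fin n) ℝ)
    (X : Matrix (Fin n) (Fin k) ℝ) (B : Matrix (Fin k) (Fin k) ℝ)
    (h : ∀ i j u v, A i j ≠ 0 → X i u ≠ 0 → X j v ≠ 0 → B u v = 0) :
    traceInner A (X * B * Xᵀ) = 0 := by
  simp only [traceInner, trace, diag_apply, transpose_apply, mul_apply]
  refine sum_eq_zero fun j _ => sum_eq_zero fun i _ => ?_
  by_cases hA : A i j = 0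
  · rw [hA, zero_mul]
  refine mul_eq_zero_of_right (A i j) (sum_eq_zero fun v _ => ?_)
  rw [sum_mul]
  refine sum_eq_zero fun u _ => ?_
  by_cases hu : X i u = 0
  · simp [hu]
  by_cases hv : X j v = 0
  · simp [hv]
  simp [h i j u v hA hu hv]

lemma natAbs_sub_le_bdwLabel {n : ℕ} {A : Matrix (Fin n) (Fin n) ℝ} {i j : Fin n}
    (hA : A i j ≠ 0) (φ : Equiv.Perm (Fin n)) :
    (((φ i : ℕ) : ℤ) - ((φ j : ℕ) : ℤ)).natAbs ≤ bdwLabel A φ := by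
  have := le_sup (f := fun p : Fin n × Fin n => if A p.1 p.2 ≠ 0 then
    (((φ p.1 : ℕ) : ℤ) - ((φ p.2 : ℕ) : ℤ)).natAbs else 0) (mem_univ (i, j))
  simpa [bdwLabel, hA] using this

lemma exists_bdwLabel_eq_bdw {n : ℕ} (A : Matrix (Fin n) (Fin n) ℝ) :
    ∃ φ, bdwLabel A φ = bdw A :=
  Nat.sInf_mem (Set.range_nonempty _)

lemma le_add_of_le_windowSum {m : ℕ → ℕ} {k r b u v x y : ℕ}
    (hb : ∀ t, 1 ≤ t → t ≤ k - r - 1 → b ≤ ∑ l ∈ Ico t (t + r), m l) (hu : u < k)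
    (hx : ∑ l ∈ range u, m l ≤ x) (hy : y < ∑ l ∈ range (v + 1), m l) (hxy : x ≤ y + b) :
    u ≤ v + r := by
  by_contra! huv
  have hwin := hb (v + 1) (by omega) (by omega)
  have hsplit := sum_range_add_sum_Ico m (Nat.le_add_right (v + 1) r)
  have := sum_range_le_sum_range m (show v + 1 + r ≤ u by omega)
  omega

lemma Bmat_eq_zero_of_natAbs_sub_le {m : ℕ → ℕ} {k r b : ℕ}
    (hb : ∀ t, 1 ≤ t → t ≤ k - r - 1 → b ≤ ∑ l ∈ Ico t (t + r), m l) {u v : Fin k} {x y : ℕ}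
    (hx : ∑ l ∈ range u, m l ≤ x ∧ x < ∑ l ∈ range (u + 1), m l)
    (hy : ∑ l ∈ range v, m l ≤ y ∧ y < ∑ l ∈ range (v + 1), m l)
    (hxy : ((x : ℤ) - y).natAbs ≤ b) : Bmat k r u v = 0 := by
  have huv := le_add_of_le_windowSum hb u.isLt hx.1 hy.2 (by omega)
  have hvu := le_add_of_le_windowSum hb v.isLt hy.1 hx.2 (by omega)
  simp only [Bmat, of_apply, ite_eq_right_iff, one_ne_zero, imp_false, not_lt, abs_le]
  omega

theorem bandwidth_lower_bound_of_minPart_pos_general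
    (n k r : ℕ) (m : ℕ → ℕ) (A : Matrix (Fin n) (Fin n) ℝ)
    (hsum : ∑ i ∈ Finset.range k, m i = n)
    (hpos : ∀ X : Matrix (Fin n) (Fin k) ℝ, IsPartitionMatrix n k m X →
      0 < (1 / 2 : ℝ) * traceInner A (X * Bmat k r * Xᵀ)) :
    sInf {s : ℕ | ∃ t, 1 ≤ t ∧ t ≤ k - r - 1 ∧ s = ∑ l ∈ Finset.Ico t (t + r), m l} <
      bdw A := by
  by_contra! hbdw
  obtain ⟨φ, hφ⟩ := exists_bdwLabel_eq_bdw A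
  have hb : ∀ t, 1 ≤ t → t ≤ k - r - 1 → bdw A ≤ ∑ l ∈ Ico t (t + r), m l :=
    fun t h₁ h₂ => hbdw.trans (Nat.sInf_le ⟨t, h₁, h₂, rfl⟩)
  set X := (basicPartition n k m).submatrix φ id
  have hzero : traceInner A (X * Bmat k r * Xᵀ) = 0 :=
    traceInner_mul_mul_transpose_eq_zero A X _ fun i j u v hA hu hv =>
      Bmat_eq_zero_of_natAbs_sub_le hb (by simpa [X, basicPartition] using hu)
        (by simpa [X, basicPartition] using hv) (hφ ▸ natAbs_sub_le_bdwLabel hA φ)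
  simpa [hzero] using hpos X ((isPartitionMatrix_basicPartition hsum).submatrix_perm φ)

/-- Theorem 1 of the paper: if the minimum of
`(1/2)⟨A, X B_{r,k} Xᵀ⟩` over all partition matrices `X ∈ P_m` is strictly
positive, then `bdw(A) > min{ m_2 + ⋯ + m_{r+1}, …, m_{k-r} + ⋯ + m_{k-1} }`
(written here with 0-indexed block sizes `m 0, …, m (k-1)`). -/
theorem bandwidth_lower_bound_of_minPart_pos
    (n k r : ℕ) (m : ℕ → ℕ) (A : Matrix (Fin n) (Fin n) ℝ)
    (hA : IsAdjacency A) (hk3 : 3 ≤ k) (hkn : k ≤ n)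
    (hm : ∀ i < k, 1 ≤ m i) (hsum : ∑ i ∈ Finset.range k, m i = n)
    (hr1 : 1 ≤ r) (hrk : r ≤ k - 2)
    (hpos : ∀ X : Matrix (Fin n) (Fin k) ℝ, IsPartitionMatrix n k m X →
      0 < (1 / 2 : ℝ) * traceInner A (X * Bmat k r * Xᵀ)) :
    sInf {s : ℕ | ∃ t, 1 ≤ t ∧ t ≤ k - r - 1 ∧ s = ∑ l ∈ Finset.Ico t (t + r), m l} <
      bdw A :=
  bandwidth_lower_bound_of_minPart_pos_general n k r m A hsum hpos

end
end

section
/- Let A be the adjacency matrix of a simple undirected graph G on n vertices, let 3 ≤ k ≤ n, let m ∈ ℕ^k with m_i ≥ 1 for all i and Σ_{i=1}^k m_i = n, and let 1 ≤ r ≤ k−2. If min over all partition matrices X ∈ P_m of (1/2)⟨A, X B_{r,k} Xᵀ⟩ equals 0, then bdw(A) < max{ m_1 + m_2 + … + m_{r+1}, m_2 + m_3 + … + m_{r+2}, …, m_{k−r} + … + m_k }. -/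
open Matrix Finset

attribute [local instance] Classical.propDecidable

noncomputable section

/-- Theorem 2 of the paper: if the minimum of
`(1/2)⟨A, X B_{r,k} Xᵀ⟩` over all partition matrices `X ∈ P_m` equals `0`
(i.e. all values are nonnegative and the value `0` is attained), then
`bdw(A) < max{ m_1 + ⋯ + m_{r+1}, …, m_{k-r} + ⋯ + m_k }`
(written here with 0-indexed block sizes `m 0, …, m (k-1)`). -/
theorem bandwidth_upper_bound_of_minPart_zero
    (n k r : ℕ) (m : ℕ → ℕ) (A : Matrix (Fin n) (Fin n) ℝ)
    (hA : IsAdjacency A) (hk3 : 3 ≤ k) (hkn : k ≤ n)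
    (hm : ∀ i < k, 1 ≤ m i) (hsum : ∑ i ∈ Finset.range k, m i = n)
    (hr1 : 1 ≤ r) (hrk : r ≤ k - 2)
    (hnonneg : ∀ X : Matrix (Fin n) (Fin k) ℝ, IsPartitionMatrix n k m X →
      0 ≤ (1 / 2 : ℝ) * traceInner A (X * Bmat k r * Xᵀ))
    (hzero : ∃ X : Matrix (Fin n) (Fin k) ℝ, IsPartitionMatrix n k m X ∧
      (1 / 2 : ℝ) * traceInner A (X * Bmat k r * Xᵀ) = 0) :
    bdw A < sSup {s : ℕ | ∃ t, t ≤ k - r - 1 ∧ s = ∑ l ∈ Finset.Ico t (t + r + 1), m l} := by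
  classical
  obtain ⟨X, ⟨hX01, hXrow, hXcol⟩, hXzero⟩ := hzero
  -- the block function `b`
  have hbex : ∀ i : Fin n, ∃ j, X i j = 1 := by
    intro i
    by_contra h
    push_neg at h
    have h0 : ∑ j, X i j = 0 :=
      Finset.sum_eq_zero fun j _ => (hX01 i j).resolve_right (h j)
    rw [hXrow i] at h0
    norm_num at h0
  set b : Fin n → Fin k := fun i => (hbex i).choose with hbdef
  have hbX : ∀ i, X i (b i) = 1 := fun i => (hbex i).choose_spec
  have hXval : ∀ i j, X i j = if b i = j then 1 else 0 := by
    intro i j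
    by_cases h : b i = j
    · simp [← h, hbX]
    · simp only [h, if_false]
      rcases hX01 i j with h0 | h1
      · exact h0
      · exfalso
        have hle : ({j, b i} : Finset (Fin k)).sum (X i) ≤ ∑ j', X i j' := by
          apply Finset.sum_le_sum_of_subset_of_nonneg (Finset.subset_univ _)
          intro j' _ _
          rcases hX01 i j' with h' | h' <;> rw [h'] <;> norm_num
        rw [Finset.sum_pair (fun hc => h hc.symm), h1, hbX, hXrow] at hle
        norm_num at hle
  -- fiber cardinalities
  have hfiber : ∀ u : Fin k, (Finset.univ.filter fun i => b i = u).card = m (u : ℕ) := by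
    intro u
    have h := hXcol u
    have h2 : ∑ i, X i u = ((Finset.univ.filter fun i => b i = u).card : ℝ) := by
      rw [Finset.sum_congr rfl fun i _ => hXval i u]
      rw [Finset.sum_boole]
    rw [h2] at h
    exact_mod_cast h
  -- prefix sums
  set S : ℕ → ℕ := fun c => ∑ l ∈ Finset.range c, m l with hSdef
  have hSmono : ∀ c c' : ℕ, c ≤ c' → S c ≤ S c' := by
    intro c c' hcc
    apply Finset.sum_le_sum_of_subset
    exact Finset.range_subset_range.mpr hcc
  have hScons : ∀ t : ℕ, S t + ∑ l ∈ Finset.Ico t (t + r + 1), m l = S (t + r + 1) := by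
    intro t
    simp only [hSdef, Finset.range_eq_Ico]
    exact Finset.sum_Ico_consecutive m (Nat.zero_le t) (by omega)
  have hcount : ∀ c, c ≤ k →
      (Finset.univ.filter fun i : Fin n => (b i : ℕ) < c).card = S c := by
    intro c hc
    have hstep : S c = ∑ l ∈ Finset.range c,
        (Finset.univ.filter fun i : Fin n => (b i : ℕ) = l).card := by
      apply Finset.sum_congr rfl
      intro l hl
      rw [Finset.mem_range] at hl
      have hlk : l < k := lt_of_lt_of_le hl hc
      have heq : (Finset.univ.filter fun i : Fin n => (b i : ℕ) = l) =
          (Finset.univ.filter fun i : Fin n => b i = ⟨l, hlk⟩) := by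
        apply Finset.filter_congr
        intro i _
        simp [Fin.ext_iff]
      rw [heq, hfiber]
    rw [hstep]; symm
    calc ∑ l ∈ Finset.range c, (Finset.univ.filter fun i : Fin n => (b i : ℕ) = l).card
        = ∑ l ∈ Finset.range c, ∑ i : Fin n, (if (b i : ℕ) = l then 1 else 0) := by
          apply Finset.sum_congr rfl
          intro l _
          rw [Finset.card_filter]
      _ = ∑ i : Fin n, ∑ l ∈ Finset.range c, (if (b i : ℕ) = l then 1 else 0) :=
          Finset.sum_comm
      _ = ∑ i : Fin n, (if (b i : ℕ) < c then 1 else 0) := by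
          apply Finset.sum_congr rfl
          intro i _
          rw [Finset.sum_ite_eq (Finset.range c) ((b i : ℕ)) (fun _ => 1)]
          simp [Finset.mem_range]
      _ = (Finset.univ.filter fun i : Fin n => (b i : ℕ) < c).card :=
          (Finset.card_filter _ _).symm
  -- the sorting permutation
  set f : Fin n → Lex (Fin k × Fin n) := fun i => toLex (b i, i) with hfdef
  set σ : Equiv.Perm (Fin n) := Tuple.sort f with hσdef
  set φ : Equiv.Perm (Fin n) := σ⁻¹ with hφdef
  have hmono : Monotone (f ∘ σ) := Tuple.monotone_sort f
  have hP : ∀ i i' : Fin n, φ i ≤ φ i' → f i ≤ f i' := by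
    intro i i' h
    have h2 := hmono h
    simpa [Function.comp, hφdef, Equiv.Perm.inv_def, Equiv.apply_symm_apply] using h2
  have hble : ∀ i i' : Fin n, φ i ≤ φ i' → b i ≤ b i' := by
    intro i i' h
    have h2 := hP i i' h
    rw [hfdef] at h2
    rw [Prod.Lex.le_iff] at h2
    rcases h2 with h2 | ⟨h2, _⟩
    · exact le_of_lt h2
    · exact le_of_eq h2
  have hblt : ∀ i i' : Fin n, b i < b i' → φ i < φ i' := by
    intro i i' h
    by_contra hc
    push_neg at hc
    exact absurd (hble i' i hc) (not_le.mpr h)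
  -- rank cardinalities
  have hcard_lt : ∀ i : Fin n,
      (Finset.univ.filter fun i' => φ i' < φ i).card = (φ i : ℕ) := by
    intro i
    rw [← Fin.card_Iio (φ i)]
    apply Finset.card_bij (fun a _ => φ a)
    · intro a ha
      simp only [Finset.mem_filter, Finset.mem_univ, true_and] at ha
      simpa [Finset.mem_Iio] using ha
    · intro a _ a' _ h
      exact φ.injective h
    · intro v hv
      refine ⟨φ.symm v, ?_, by simp⟩
      simp only [Finset.mem_filter, Finset.mem_univ, true_and]
      simpa [Finset.mem_Iio] using hv
  have hcard_le : ∀ i : Fin n,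
      (Finset.univ.filter fun i' => φ i' ≤ φ i).card = (φ i : ℕ) + 1 := by
    intro i
    rw [← Fin.card_Iic (φ i)]
    apply Finset.card_bij (fun a _ => φ a)
    · intro a ha
      simp only [Finset.mem_filter, Finset.mem_univ, true_and] at ha
      simpa [Finset.mem_Iic] using ha
    · intro a _ a' _ h
      exact φ.injective h
    · intro v hv
      refine ⟨φ.symm v, ?_, by simp⟩
      simp only [Finset.mem_filter, Finset.mem_univ, true_and]
      simpa [Finset.mem_Iic] using hv
  -- position bounds
  have hup : ∀ i : Fin n, (φ i : ℕ) + 1 ≤ S ((b i : ℕ) + 1) := by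
    intro i
    have hsub : (Finset.univ.filter fun i' => φ i' ≤ φ i) ⊆
        (Finset.univ.filter fun i' : Fin n => (b i' : ℕ) < (b i : ℕ) + 1) := by
      intro i' hi'
      simp only [Finset.mem_filter, Finset.mem_univ, true_and] at hi' ⊢
      have h2 := hble i' i hi'
      rw [Fin.le_def] at h2
      omega
    have hcc := Finset.card_le_card hsub
    rw [hcard_le i, hcount ((b i : ℕ) + 1) (b i).isLt] at hcc
    exact hcc
  have hlow : ∀ i : Fin n, S (b i : ℕ) ≤ (φ i : ℕ) := by
    intro i
    have hsub : (Finset.univ.filter fun i' : Fin n => (b i' : ℕ) < (b i : ℕ)) ⊆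
        (Finset.univ.filter fun i' => φ i' < φ i) := by
      intro i' hi'
      simp only [Finset.mem_filter, Finset.mem_univ, true_and] at hi' ⊢
      exact hblt i' i (by rw [Fin.lt_def]; exact hi')
    have hcc := Finset.card_le_card hsub
    rw [hcount (b i : ℕ) (le_of_lt (b i).isLt), hcard_lt i] at hcc
    exact hcc
  -- the quadratic form picks out block pairs
  have hM : ∀ p q : Fin n, (X * Bmat k r * Xᵀ) p q = Bmat k r (b p) (b q) := by
    intro p q
    simp only [Matrix.mul_apply, Matrix.transpose_apply, hXval, ite_mul, mul_ite,
      one_mul, mul_one, zero_mul, mul_zero, Finset.sum_ite_eq, Finset.mem_univ, if_true]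
  have htrace : traceInner A (X * Bmat k r * Xᵀ) = 0 := by linarith [hXzero]
  have hT : traceInner A (X * Bmat k r * Xᵀ) =
      ∑ p : Fin n, ∑ q : Fin n, A q p * Bmat k r (b q) (b p) := by
    unfold traceInner Matrix.trace
    simp only [Matrix.diag, Matrix.mul_apply, Matrix.transpose_apply, hM]
  have hBnn : ∀ u v : Fin k, 0 ≤ Bmat k r u v := by
    intro u v
    unfold Bmat
    simp only [Matrix.of_apply]
    split <;> norm_num
  have hnn : ∀ p q : Fin n, 0 ≤ A q p * Bmat k r (b q) (b p) := by
    intro p q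
    apply mul_nonneg
    · rcases hA.1 q p with h | h <;> rw [h] <;> norm_num
    · exact hBnn _ _
  have hterm : ∀ p q : Fin n, A q p * Bmat k r (b q) (b p) = 0 := by
    have h0 : ∑ p : Fin n, ∑ q : Fin n, A q p * Bmat k r (b q) (b p) = 0 := by
      rw [← hT]; exact htrace
    intro p q
    have h1 := (Finset.sum_eq_zero_iff_of_nonneg
      (fun p' _ => Finset.sum_nonneg fun q' _ => hnn p' q')).mp h0 p (Finset.mem_univ p)
    exact (Finset.sum_eq_zero_iff_of_nonneg fun q' _ => hnn p q').mp h1 q (Finset.mem_univ q)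
  have hedge : ∀ p q : Fin n, A p q ≠ 0 →
      (b p : ℕ) ≤ (b q : ℕ) + r ∧ (b q : ℕ) ≤ (b p : ℕ) + r := by
    intro p q hpq
    have h1 : A p q = 1 := (hA.1 p q).resolve_left hpq
    have h2 := hterm q p
    rw [h1, one_mul] at h2
    unfold Bmat at h2
    simp only [Matrix.of_apply] at h2
    by_cases h : (r : ℤ) < |((b p : ℕ) : ℤ) - ((b q : ℕ) : ℤ)|
    · rw [if_pos h] at h2; norm_num at h2
    · push_neg at h
      rw [abs_le] at h
      constructor <;> omega
  -- the supremum set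
  have hbdd : BddAbove {s : ℕ | ∃ t, t ≤ k - r - 1 ∧
      s = ∑ l ∈ Finset.Ico t (t + r + 1), m l} := by
    refine ⟨n, ?_⟩
    rintro s ⟨t, ht, rfl⟩
    calc ∑ l ∈ Finset.Ico t (t + r + 1), m l ≤ ∑ l ∈ Finset.range k, m l := by
          apply Finset.sum_le_sum_of_subset
          intro l hl
          simp only [Finset.mem_Ico] at hl
          simp only [Finset.mem_range]
          omega
      _ = n := hsum
  have hMpos : 0 < sSup {s : ℕ | ∃ t, t ≤ k - r - 1 ∧
      s = ∑ l ∈ Finset.Ico t (t + r + 1), m l} := by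
    have hmem0 : (∑ l ∈ Finset.Ico 0 (0 + r + 1), m l) ∈ {s : ℕ | ∃ t, t ≤ k - r - 1 ∧
        s = ∑ l ∈ Finset.Ico t (t + r + 1), m l} := ⟨0, Nat.zero_le _, rfl⟩
    have h1 : 1 ≤ ∑ l ∈ Finset.Ico 0 (0 + r + 1), m l := by
      have hm0 : 1 ≤ m 0 := hm 0 (by omega)
      have h0 : (0 : ℕ) ∈ Finset.Ico 0 (0 + r + 1) := by
        simp only [Finset.mem_Ico]
        omega
      exact le_trans hm0 (Finset.single_le_sum (fun _ _ => Nat.zero_le _) h0)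
    exact lt_of_lt_of_le h1 (le_csSup hbdd hmem0)
  -- per-edge bound
  have hpair : ∀ p : Fin n × Fin n,
      (if A p.1 p.2 ≠ 0 then (((φ p.1 : ℕ) : ℤ) - ((φ p.2 : ℕ) : ℤ)).natAbs else 0) <
      sSup {s : ℕ | ∃ t, t ≤ k - r - 1 ∧
        s = ∑ l ∈ Finset.Ico t (t + r + 1), m l} := by
    intro p
    split
    · next h =>
      obtain ⟨h1, h2⟩ := hedge p.1 p.2 h
      set t := min (min (b p.1 : ℕ) (b p.2 : ℕ)) (k - r - 1) with htdef
      have htle : t ≤ k - r - 1 := min_le_right _ _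
      have hw : (∑ l ∈ Finset.Ico t (t + r + 1), m l) ∈ {s : ℕ | ∃ t', t' ≤ k - r - 1 ∧
          s = ∑ l ∈ Finset.Ico t' (t' + r + 1), m l} := ⟨t, htle, rfl⟩
      have hb1k : (b p.1 : ℕ) < k := (b p.1).isLt
      have hb2k : (b p.2 : ℕ) < k := (b p.2).isLt
      have ht1 : (b p.1 : ℕ) + 1 ≤ t + r + 1 := by omega
      have ht2 : (b p.2 : ℕ) + 1 ≤ t + r + 1 := by omega
      have htb1 : t ≤ (b p.1 : ℕ) := le_trans (min_le_left _ _) (min_le_left _ _)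
      have htb2 : t ≤ (b p.2 : ℕ) := le_trans (min_le_left _ _) (min_le_right _ _)
      have ha1 : S t ≤ (φ p.1 : ℕ) := le_trans (hSmono _ _ htb1) (hlow p.1)
      have ha2 : S t ≤ (φ p.2 : ℕ) := le_trans (hSmono _ _ htb2) (hlow p.2)
      have hc1 : (φ p.1 : ℕ) + 1 ≤ S (t + r + 1) := le_trans (hup p.1) (hSmono _ _ ht1)
      have hc2 : (φ p.2 : ℕ) + 1 ≤ S (t + r + 1) := le_trans (hup p.2) (hSmono _ _ ht2)
      have hScon := hScons t
      have hlt : (((φ p.1 : ℕ) : ℤ) - ((φ p.2 : ℕ) : ℤ)).natAbs <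
          ∑ l ∈ Finset.Ico t (t + r + 1), m l := by omega
      exact lt_of_lt_of_le hlt (le_csSup hbdd hw)
    · next h => exact hMpos
  have hlabel : bdwLabel A φ < sSup {s : ℕ | ∃ t, t ≤ k - r - 1 ∧
      s = ∑ l ∈ Finset.Ico t (t + r + 1), m l} := by
    unfold bdwLabel
    rw [Finset.sup_lt_iff (by simpa using hMpos)]
    exact fun p _ => hpair p
  exact lt_of_le_of_lt (ciInf_le (OrderBot.bddBelow _) φ) hlabel

end
end

section
/- Let Z be a symmetric positive semidefinite matrix of order nk+1 written in block form with n×n diagonal blocks X_1, …, X_k, n×n off-diagonal blocks X_{ij} (i ≠ j, with X_{ji} = X_{ij}ᵀ), last column (x_1; …; x_k; 1) and symmetric last row. Suppose diag(X_i) = x_i for all i, diag(X_{ij}) = 0 for all i ≠ j, trace(X_i) = m_i for all i, and ⟨J_n, X_i⟩ = m_i² for all i, where m ∈ ℕ^k with Σ_{i=1}^k m_i = n. Then the nullspace of Z contains the k vectors v_i ∈ ℝ^{nk+1} (i = 1, …, k) having the all-ones vector e_n in block i, zeros in the other blocks, and −m_i in the last coordinate, as well as the n vectors w_s ∈ ℝ^{nk+1}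 (s = 1, …, n) having the s-th standard basis vector e_n^s in every one of the k blocks and −1 in the last coordinate; i.e., Z v_i = 0 and Z w_s = 0 for all i, s. -/
open Matrix Finset

noncomputable section

private lemma sum_sum_unit_aux {ι : Type*} [Fintype ι] (f : ι ⊕ Unit → ℝ) :
    ∑ a : ι ⊕ Unit, f a = (∑ q : ι, f (Sum.inl q)) + f (Sum.inr ()) := by
  simp [Fintype.sum_sum_type]

private lemma sum_fst_ite_aux {α β : Type*} [Fintype α] [Fintype β] [DecidableEq α]
    (i : α) (h : α × β → ℝ) :
    ∑ q : α × β, (if q.1 = i then h q else 0) = ∑ b : β, h (i, b) := by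
  rw [Fintype.sum_prod_type]
  rw [Finset.sum_congr rfl (fun a _ => Finset.sum_ite_irrel (a = i) _ _ _)]
  simp

private lemma sum_snd_ite_aux {α β : Type*} [Fintype α] [Fintype β] [DecidableEq β]
    (s : β) (h : α × β → ℝ) :
    ∑ q : α × β, (if q.2 = s then h q else 0) = ∑ a : α, h (a, s) := by
  rw [Fintype.sum_prod_type]
  simp only [Finset.sum_ite_eq', Finset.mem_univ, if_true]

/-- Lemma 1 of the paper: the given `k` vectors `v_i` and
`n` vectors `w_s` lie in the nullspace of any positive semidefinite matrix
`Z` of order `nk + 1` (indexed here by `(Fin k × Fin n) ⊕ Unit`, in block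
form with diagonal blocks `X_i`, off-diagonal blocks `X_{ij}`, last column
`(x_1; …; x_k; 1)`) satisfying `diag(X_i) = x_i`, `diag(X_{ij}) = 0` for
`i ≠ j`, `trace(X_i) = m_i`, and `⟨J_n, X_i⟩ = m_i²`. -/
theorem nullspace_of_liftedSDP
    (n k : ℕ) (m : ℕ → ℕ) (hsum : ∑ i ∈ Finset.range k, m i = n)
    (Z : Matrix ((Fin k × Fin n) ⊕ Unit) ((Fin k × Fin n) ⊕ Unit) ℝ)
    (hpsd : Z.PosSemidef)
    (hcorner : Z (Sum.inr ()) (Sum.inr ()) = 1)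
    (hdiag : ∀ (i : Fin k) (s : Fin n),
      Z (Sum.inl (i, s)) (Sum.inl (i, s)) = Z (Sum.inl (i, s)) (Sum.inr ()))
    (hdiag2 : ∀ (i j : Fin k), i ≠ j → ∀ s : Fin n,
      Z (Sum.inl (i, s)) (Sum.inl (j, s)) = 0)
    (htr : ∀ i : Fin k, ∑ s : Fin n, Z (Sum.inl (i, s)) (Sum.inl (i, s)) = (m i : ℝ))
    (hJ : ∀ i : Fin k, ∑ s : Fin n, ∑ t : Fin n,
      Z (Sum.inl (i, s)) (Sum.inl (i, t)) = (m i : ℝ) ^ 2) :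
    (∀ i : Fin k,
      Z.mulVec (Sum.elim (fun q : Fin k × Fin n => if q.1 = i then (1 : ℝ) else 0)
        (fun _ : Unit => -(m i : ℝ))) = 0) ∧
    (∀ s : Fin n,
      Z.mulVec (Sum.elim (fun q : Fin k × Fin n => if q.2 = s then (1 : ℝ) else 0)
        (fun _ : Unit => (-1 : ℝ))) = 0) := by
  have hsym : ∀ a b, Z a b = Z b a :=
    fun a b => (star_trivial (Z a b)).symm.trans (hpsd.isHermitian.apply b a)
  -- quadratic form for the v vectors
  have part1 : ∀ i : Fin k,
      Z.mulVec (Sum.elim (fun q : Fin k × Fin n => if q.1 = i then (1 : ℝ) else 0)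
        (fun _ : Unit => -(m i : ℝ))) = 0 := by
    intro i
    set v : (Fin k × Fin n) ⊕ Unit → ℝ :=
      Sum.elim (fun q : Fin k × Fin n => if q.1 = i then (1 : ℝ) else 0)
        (fun _ : Unit => -(m i : ℝ)) with hv
    rw [← hpsd.dotProduct_mulVec_zero_iff v]
    have hstar : star v = v := funext fun a => star_trivial _
    rw [hstar]
    have hmv : ∀ a, (Z *ᵥ v) a =
        (∑ t : Fin n, Z a (Sum.inl (i, t))) - (m i : ℝ) * Z a (Sum.inr ()) := by
      intro a
      show (∑ b, Z a b * v b) = _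
      rw [sum_sum_unit_aux (fun b => Z a b * v b)]
      have : ∀ q : Fin k × Fin n, Z a (Sum.inl q) * v (Sum.inl q)
          = if q.1 = i then Z a (Sum.inl q) else 0 := by
        intro q; simp [hv, mul_ite]
      rw [Finset.sum_congr rfl (fun q _ => this q), sum_fst_ite_aux i]
      simp [hv]
      ring
    have hq : v ⬝ᵥ (Z *ᵥ v) = 0 := by
      rw [dotProduct, sum_sum_unit_aux (fun a => v a * (Z *ᵥ v) a)]
      have : ∀ q : Fin k × Fin n, v (Sum.inl q) * (Z *ᵥ v) (Sum.inl q)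
          = if q.1 = i then (Z *ᵥ v) (Sum.inl q) else 0 := by
        intro q; simp [hv, ite_mul]
      rw [Finset.sum_congr rfl (fun q _ => this q), sum_fst_ite_aux i]
      have h2 : ∑ s : Fin n, (Z *ᵥ v) (Sum.inl (i, s))
          = (m i : ℝ)^2 - (m i : ℝ) * (m i : ℝ) := by
        rw [Finset.sum_congr rfl (fun s _ => hmv (Sum.inl (i, s))),
          Finset.sum_sub_distrib, hJ i, ← Finset.mul_sum]
        have hcol : ∑ s : Fin n, Z (Sum.inl (i, s)) (Sum.inr ()) = (m i : ℝ) := by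
          rw [← htr i]
          exact Finset.sum_congr rfl (fun s _ => (hdiag i s).symm)
        rw [hcol]
      have h3 : (Z *ᵥ v) (Sum.inr ()) = 0 := by
        rw [hmv (Sum.inr ())]
        have hrow : ∑ t : Fin n, Z (Sum.inr ()) (Sum.inl (i, t)) = (m i : ℝ) := by
          rw [← htr i]
          refine Finset.sum_congr rfl (fun t _ => ?_)
          rw [hsym, ← hdiag i t]
        rw [hrow, hcorner]; ring
      rw [h2, h3]
      ring
    exact hq
  refine ⟨part1, ?_⟩
  -- column sums d s := ∑ i, Z (i,s) (i,s)
  set d : Fin n → ℝ := fun s => ∑ i : Fin k, Z (Sum.inl (i, s)) (Sum.inl (i, s)) with hd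
  have hdsum : ∑ s : Fin n, d s = (n : ℝ) := by
    rw [hd]
    rw [Finset.sum_comm]
    rw [Finset.sum_congr rfl (fun i _ => htr i)]
    rw [← Nat.cast_sum]
    rw [Fin.sum_univ_eq_sum_range, hsum]
  -- quadratic form for w_s equals 1 - d s
  have hw : ∀ s : Fin n,
      (Sum.elim (fun q : Fin k × Fin n => if q.2 = s then (1 : ℝ) else 0)
        (fun _ : Unit => -(1 : ℝ))) ⬝ᵥ
      (Z *ᵥ (Sum.elim (fun q : Fin k × Fin n => if q.2 = s then (1 : ℝ) else 0)
        (fun _ : Unit => -(1 : ℝ)))) = 1 - d s := by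
    intro s
    set w : (Fin k × Fin n) ⊕ Unit → ℝ :=
      Sum.elim (fun q : Fin k × Fin n => if q.2 = s then (1 : ℝ) else 0)
        (fun _ : Unit => -(1 : ℝ)) with hwdef
    have hmv : ∀ a, (Z *ᵥ w) a =
        (∑ j : Fin k, Z a (Sum.inl (j, s))) - Z a (Sum.inr ()) := by
      intro a
      show (∑ b, Z a b * w b) = _
      rw [sum_sum_unit_aux (fun b => Z a b * w b)]
      have : ∀ q : Fin k × Fin n, Z a (Sum.inl q) * w (Sum.inl q)
          = if q.2 = s then Z a (Sum.inl q) else 0 := by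
        intro q; simp [hwdef, mul_ite]
      rw [Finset.sum_congr rfl (fun q _ => this q), sum_snd_ite_aux s]
      simp [hwdef]
      ring
    rw [dotProduct, sum_sum_unit_aux (fun a => w a * (Z *ᵥ w) a)]
    have : ∀ q : Fin k × Fin n, w (Sum.inl q) * (Z *ᵥ w) (Sum.inl q)
        = if q.2 = s then (Z *ᵥ w) (Sum.inl q) else 0 := by
      intro q; simp [hwdef, ite_mul]
    rw [Finset.sum_congr rfl (fun q _ => this q), sum_snd_ite_aux s]
    have h2 : ∑ j : Fin k, (Z *ᵥ w) (Sum.inl (j, s)) = 0 := by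
      rw [Finset.sum_congr rfl (fun j _ => hmv (Sum.inl (j, s))), Finset.sum_sub_distrib]
      have hdd : ∀ j : Fin k, ∑ j' : Fin k, Z (Sum.inl (j, s)) (Sum.inl (j', s))
          = Z (Sum.inl (j, s)) (Sum.inl (j, s)) := by
        intro j
        refine Finset.sum_eq_single j (fun j' _ hne => hdiag2 j j' (Ne.symm hne) s) ?_
        intro h; exact absurd (Finset.mem_univ j) h
      rw [Finset.sum_congr rfl (fun j _ => hdd j)]
      rw [Finset.sum_congr (M := ℝ) rfl (fun j (_ : j ∈ Finset.univ) => hdiag j s)]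
      ring_nf
    have h3 : (Z *ᵥ w) (Sum.inr ()) = (d s) - 1 := by
      rw [hmv (Sum.inr ()), hcorner, hd]
      congr 1
      refine Finset.sum_congr rfl (fun j _ => ?_)
      rw [hsym, ← hdiag j s]
    rw [h2, h3]
    simp [hwdef]
  -- nonnegativity gives d s ≤ 1; total sum n forces d s = 1
  have hle : ∀ s : Fin n, d s ≤ 1 := by
    intro s
    have h0 := hpsd.dotProduct_mulVec_nonneg (Sum.elim (fun q : Fin k × Fin n => if q.2 = s then (1 : ℝ) else 0)
        (fun _ : Unit => -(1 : ℝ)))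
    have hstar : star (Sum.elim (fun q : Fin k × Fin n => if q.2 = s then (1 : ℝ) else 0)
        (fun _ : Unit => -(1 : ℝ))) = (Sum.elim (fun q : Fin k × Fin n => if q.2 = s then (1 : ℝ) else 0)
        (fun _ : Unit => -(1 : ℝ))) := funext fun a => star_trivial _
    rw [hstar, hw s] at h0
    simpa using h0
  have hone : ∀ s : Fin n, d s = 1 := by
    by_contra hcon
    push_neg at hcon
    obtain ⟨s0, hs0⟩ := hcon
    have hlt : d s0 < 1 := lt_of_le_of_ne (hle s0) hs0
    have : ∑ s : Fin n, d s < ∑ s : Fin n, (1 : ℝ) := by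
      exact Finset.sum_lt_sum (fun s _ => hle s) ⟨s0, Finset.mem_univ s0, hlt⟩
    rw [hdsum] at this
    simp at this
  intro s
  rw [← hpsd.dotProduct_mulVec_zero_iff]
  have hstar : star (Sum.elim (fun q : Fin k × Fin n => if q.2 = s then (1 : ℝ) else 0)
      (fun _ : Unit => -(1 : ℝ))) = (Sum.elim (fun q : Fin k × Fin n => if q.2 = s then (1 : ℝ) else 0)
      (fun _ : Unit => -(1 : ℝ))) := funext fun a => star_trivial _
  rw [hstar, hw s, hone s]
  ring

end
end

section
/- Let 3 ≤ k ≤ n and m ∈ ℕ^k with m_i ≥ 1 and Σ_{i=1}^k m_i = n. Consider the (nk+1)×(n+k) matrix W whose first k columns are the vectors v_i (having e_n in block i, zeros in the other blocks, and −m_i in the last coordinate) and whose last n columns are the vectors w_s (having e_n^s in every block and −1 in the last coordinate). Then the sum of the first k columns of W equals the sum of its last n columns, and rank(W) = n + k − 1. -/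
open Matrix Finset

noncomputable section

/-- The `(nk+1) × (n+k)` matrix `W` whose first `k` columns are the vectors
`v_i` (all-ones vector in block `i`, zeros elsewhere, `-m_i` in the last
coordinate) and whose last `n` columns are the vectors `w_s` (the `s`-th
standard basis vector in every block and `-1` in the last coordinate). -/
def Wmat (n k : ℕ) (m : ℕ → ℕ) :
    Matrix ((Fin k × Fin n) ⊕ Unit) (Fin k ⊕ Fin n) ℝ :=
  Matrix.of fun a c =>
    match a, c with
    | Sum.inl (j, _), Sum.inl i => if j = i then (1 : ℝ) else 0
    | Sum.inl (_, t), Sum.inr s => if t = s then (1 : ℝ) else 0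
    | Sum.inr _, Sum.inl i => -(m i : ℝ)
    | Sum.inr _, Sum.inr _ => (-1 : ℝ)

/-- the sum of the first `k` columns of `W` equals the sum of
its last `n` columns, and `rank(W) = n + k - 1`. -/
theorem Wmat_colsum_and_rank
    (n k : ℕ) (m : ℕ → ℕ) (hk3 : 3 ≤ k) (hkn : k ≤ n)
    (hm : ∀ i < k, 1 ≤ m i) (hsum : ∑ i ∈ Finset.range k, m i = n) :
    (∀ a : (Fin k × Fin n) ⊕ Unit,
      ∑ i : Fin k, Wmat n k m a (Sum.inl i) = ∑ s : Fin n, Wmat n k m a (Sum.inr s)) ∧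
    (Wmat n k m).rank = n + k - 1 := by
  have hkpos : 0 < k := by omega
  have hnpos : 0 < n := by omega
  have hsumR : ∑ i : Fin k, (m i : ℝ) = (n : ℝ) := by
    rw [Fin.sum_univ_eq_sum_range (fun i => (m i : ℝ)) k]
    exact_mod_cast congrArg (Nat.cast (R := ℝ)) hsum
  constructor
  · rintro (⟨j, t⟩ | u)
    · simp [Wmat]
    · simp only [Wmat, Matrix.of_apply]
      rw [Finset.sum_neg_distrib, hsumR]
      simp
  · set i0 : Fin k := ⟨0, hkpos⟩ with hi0
    set f : Fin k ⊕ Fin n → ((Fin k × Fin n) ⊕ Unit) → ℝ := (Wmat n k m)ᵀ with hf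
    -- the dependency relation
    have hdep : f (Sum.inl i0) =
        (∑ s : Fin n, f (Sum.inr s)) - ∑ i ∈ Finset.univ.erase i0, f (Sum.inl i) := by
      funext a
      rcases a with ⟨p, t⟩ | u
      · simp only [Pi.sub_apply, Finset.sum_apply, hf, Matrix.transpose_apply, Wmat,
          Matrix.of_apply]
        by_cases hp : p = i0 <;>
          simp [hp, Finset.sum_ite_eq, Finset.sum_ite_eq', Finset.mem_erase]
      · simp only [Pi.sub_apply, Finset.sum_apply, hf, Matrix.transpose_apply, Wmat,
          Matrix.of_apply]
        have he : (∑ i ∈ Finset.univ.erase i0, (m i : ℝ)) + (m i0 : ℝ)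
            = ∑ i : Fin k, (m i : ℝ) :=
          Finset.sum_erase_add _ _ (Finset.mem_univ i0)
        have hiv : ((i0 : Fin k) : ℕ) = 0 := rfl
        rw [hiv] at he
        rw [hsumR] at he
        rw [Finset.sum_neg_distrib, Finset.sum_neg_distrib, Finset.sum_const,
          Finset.card_univ, Fintype.card_fin, nsmul_eq_mul, mul_one]
        linarith
    have hspan : Submodule.span ℝ (Set.range f)
        = Submodule.span ℝ (f '' {j | j ≠ Sum.inl i0}) := by
      apply le_antisymm
      · rw [Submodule.span_le]
        rintro _ ⟨j, rfl⟩
        by_cases hj : j = Sum.inl i0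
        · subst hj
          rw [hdep]
          refine Submodule.sub_mem _ ?_ ?_
          · exact Submodule.sum_mem _ fun s _ =>
              Submodule.subset_span ⟨Sum.inr s, by simp, rfl⟩
          · refine Submodule.sum_mem _ fun i hi => Submodule.subset_span ?_
            rw [Finset.mem_erase] at hi
            exact ⟨Sum.inl i, by simpa using hi.1, rfl⟩
        · exact Submodule.subset_span ⟨j, hj, rfl⟩
      · exact Submodule.span_mono (Set.image_subset_range f _)
    have hLI : LinearIndependent ℝ
        (fun j : {j : Fin k ⊕ Fin n // j ≠ Sum.inl i0} => f j) := by
      rw [Fintype.linearIndependent_iff]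
      intro g hg
      classical
      set G : Fin k ⊕ Fin n → ℝ :=
        fun j => if h : j = Sum.inl i0 then 0 else g ⟨j, h⟩ with hG
      have hG0 : G (Sum.inl i0) = 0 := by simp [hG]
      have hGg : ∀ (j : Fin k ⊕ Fin n) (h : j ≠ Sum.inl i0), G j = g ⟨j, h⟩ := by
        intro j h; simp [hG, h]
      have keyG : ∀ a, ∑ j : Fin k ⊕ Fin n, G j * f j a = 0 := by
        intro a
        have h1 : ∑ j : {j : Fin k ⊕ Fin n // j ≠ Sum.inl i0},
            g j * f (j : Fin k ⊕ Fin n) a = 0 := by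
          have := congrFun hg a
          simpa [Finset.sum_apply] using this
        calc ∑ j : Fin k ⊕ Fin n, G j * f j a
            = ∑ j ∈ Finset.univ.erase (Sum.inl i0), G j * f j a := by
              rw [Finset.sum_erase _ (by simp [hG0])]
          _ = ∑ j : {j : Fin k ⊕ Fin n // j ≠ Sum.inl i0},
              G (j : Fin k ⊕ Fin n) * f (j : Fin k ⊕ Fin n) a :=
              Finset.sum_subtype _ (by simp) _
          _ = ∑ j : {j : Fin k ⊕ Fin n // j ≠ Sum.inl i0},
              g j * f (j : Fin k ⊕ Fin n) a := by
              refine Finset.sum_congr rfl ?_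
              rintro ⟨j, hj⟩ _
              rw [hGg j hj]
          _ = 0 := h1
      have hpt : ∀ (p : Fin k) (t : Fin n), G (Sum.inl p) + G (Sum.inr t) = 0 := by
        intro p t
        have := keyG (Sum.inl (p, t))
        simpa [hf, Wmat, Fintype.sum_sum_type, mul_ite, mul_one, mul_zero,
          Finset.sum_ite_eq, Finset.sum_ite_eq'] using this
      set t0 : Fin n := ⟨0, hnpos⟩
      have hR : ∀ t : Fin n, G (Sum.inr t) = 0 := by
        intro t
        have := hpt i0 t
        rw [hG0] at this
        linarith
      have hL : ∀ p : Fin k, G (Sum.inl p) = 0 := by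
        intro p
        have := hpt p t0
        rw [hR t0] at this
        linarith
      rintro ⟨j, hj⟩
      rw [← hGg j hj]
      rcases j with p | t
      · exact hL p
      · exact hR t
    have hrange : f '' {j | j ≠ Sum.inl i0}
        = Set.range (fun j : {j : Fin k ⊕ Fin n // j ≠ Sum.inl i0} => f j) := by
      rw [Set.image_eq_range]
      rfl
    have hcard : Fintype.card {j : Fin k ⊕ Fin n // j ≠ Sum.inl i0} = n + k - 1 := by
      classical
      have h1 : Fintype.card {j : Fin k ⊕ Fin n // j = Sum.inl i0} = 1 :=
        Fintype.card_subtype_eq _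
      have h2 : Fintype.card {j : Fin k ⊕ Fin n // ¬ j = Sum.inl i0}
          = Fintype.card (Fin k ⊕ Fin n)
            - Fintype.card {j : Fin k ⊕ Fin n // j = Sum.inl i0} :=
        Fintype.card_subtype_compl _
      have h3 : Fintype.card (Fin k ⊕ Fin n) = k + n := by simp
      simp only [ne_eq]
      omega
    rw [Matrix.rank_eq_finrank_span_cols]
    change Module.finrank ℝ (Submodule.span ℝ (Set.range f)) = n + k - 1
    rw [hspan, hrange,
      finrank_span_eq_card hLI, hcard]

end
end

section
/- Let Z be a symmetric positive semidefinite matrix of order nk+1 in block form with n×n blocks X_{ij} (X_i := X_{ii}, X_{ji} = X_{ij}ᵀ), last column (x_1; …; x_k; 1), satisfying diag(X_i) = x_i for all i, diag(X_{ij}) = 0 for all i ≠ j, trace(X_i) = m_i for all i, and ⟨J_n, X_i⟩ = m_i² for all i, where m ∈ ℕ^k with Σ_{i=1}^k m_i = n. Then for every i ∈ {1, …, k}: Σ_{j=1}^k X_{ij} = x_i e_nᵀ (with the convention X_{ii} = X_i), and moreover x_1 + x_2 + … + x_k = e_n. -/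
open Matrix Finset

noncomputable section

/-- Lemma 2 of the paper: for any positive semidefinite `Z`
of order `nk + 1` (indexed here by `(Fin k × Fin n) ⊕ Unit`, in block form
with diagonal blocks `X_i`, off-diagonal blocks `X_{ij}` and last column
`(x_1; …; x_k; 1)`) satisfying `diag(X_i) = x_i`, `diag(X_{ij}) = 0` for
`i ≠ j`, `trace(X_i) = m_i`, and `⟨J_n, X_i⟩ = m_i²`, one has
`Σ_j X_{ij} = x_i e_nᵀ` for all `i`, and `x_1 + ⋯ + x_k = e_n`. -/
theorem rowBlockSums_of_liftedSDP
    (n k : ℕ) (m : ℕ → ℕ) (hsum : ∑ i ∈ Finset.range k, m i = n)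
    (Z : Matrix ((Fin k × Fin n) ⊕ Unit) ((Fin k × Fin n) ⊕ Unit) ℝ)
    (hpsd : Z.PosSemidef)
    (hcorner : Z (Sum.inr ()) (Sum.inr ()) = 1)
    (hdiag : ∀ (i : Fin k) (s : Fin n),
      Z (Sum.inl (i, s)) (Sum.inl (i, s)) = Z (Sum.inl (i, s)) (Sum.inr ()))
    (hdiag2 : ∀ (i j : Fin k), i ≠ j → ∀ s : Fin n,
      Z (Sum.inl (i, s)) (Sum.inl (j, s)) = 0)
    (htr : ∀ i : Fin k, ∑ s : Fin n, Z (Sum.inl (i, s)) (Sum.inl (i, s)) = (m i : ℝ))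
    (hJ : ∀ i : Fin k, ∑ s : Fin n, ∑ t : Fin n,
      Z (Sum.inl (i, s)) (Sum.inl (i, t)) = (m i : ℝ) ^ 2) :
    (∀ (i : Fin k) (s t : Fin n),
      ∑ j : Fin k, Z (Sum.inl (i, s)) (Sum.inl (j, t)) = Z (Sum.inl (i, s)) (Sum.inr ())) ∧
    (∀ s : Fin n, ∑ i : Fin k, Z (Sum.inl (i, s)) (Sum.inr ()) = 1) := by
  classical
  set x : Fin n → ℝ := fun s => ∑ i : Fin k, Z (Sum.inl (i, s)) (Sum.inr ()) with hx
  set w : Fin n → ((Fin k × Fin n) ⊕ Unit) → ℝ :=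
    fun s => Sum.elim (fun p => if p.2 = s then (1:ℝ) else 0) (fun _ => -1) with hw
  have hsym : ∀ a b, Z b a = Z a b := by
    intro a b
    have h := hpsd.1
    conv_lhs => rw [← h]
    simp [Matrix.conjTranspose_apply]
  -- entries of Z *ᵥ (w s)
  have hmv : ∀ (s : Fin n) (a : (Fin k × Fin n) ⊕ Unit), (Z *ᵥ w s) a
      = (∑ j : Fin k, Z a (Sum.inl (j, s))) - Z a (Sum.inr ()) := by
    intro s a
    simp only [Matrix.mulVec, dotProduct, Fintype.sum_sum_type, hw,
      Sum.elim_inl, Sum.elim_inr, Fintype.sum_prod_type, mul_ite, mul_one, mul_zero]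
    simp [Finset.sum_ite_eq', sub_eq_add_neg]
  -- diagonal-block row sums
  have hrowdiag : ∀ (i : Fin k) (s : Fin n),
      ∑ j : Fin k, Z (Sum.inl (i, s)) (Sum.inl (j, s)) = Z (Sum.inl (i, s)) (Sum.inr ()) := by
    intro i s
    rw [Finset.sum_eq_single i]
    · exact hdiag i s
    · intro j _ hj
      exact hdiag2 i j (fun h => hj h.symm) s
    · simp
  -- quadratic form value
  have hq : ∀ s : Fin n, w s ⬝ᵥ (Z *ᵥ w s) = 1 - x s := by
    intro s
    simp only [dotProduct, Fintype.sum_sum_type, hw, Sum.elim_inl, Sum.elim_inr,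
      Fintype.sum_prod_type, ite_mul, one_mul, zero_mul]
    simp only [Finset.sum_ite_eq', Finset.mem_univ, if_true]
    have h1 : ∀ i : Fin k, (Z *ᵥ w s) (Sum.inl (i, s)) = 0 := by
      intro i
      rw [hmv]
      rw [hrowdiag i s]
      ring
    have h2 : (Z *ᵥ w s) (Sum.inr ()) = x s - 1 := by
      rw [hmv, hcorner, hx]
      congr 1
      exact Finset.sum_congr rfl (fun j _ => hsym _ _)
    simp only [hw] at h1 h2
    simp [h1, h2]
  -- x s ≤ 1
  have hle : ∀ s : Fin n, x s ≤ 1 := by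
    intro s
    have h0 : 0 ≤ w s ⬝ᵥ (Z *ᵥ w s) := by
      have := hpsd.dotProduct_mulVec_nonneg (w s)
      simpa using this
    rw [hq s] at h0
    linarith
  -- sum of x equals n
  have hsumx : ∑ s : Fin n, x s = (n : ℝ) := by
    have : ∑ s : Fin n, x s = ∑ i : Fin k, ∑ s : Fin n, Z (Sum.inl (i, s)) (Sum.inl (i, s)) := by
      rw [Finset.sum_comm]
      exact Finset.sum_congr rfl fun i _ => Finset.sum_congr rfl fun s _ => (hdiag i s).symm
    rw [this]
    have : ∑ i : Fin k, ((m i : ℝ)) = (n : ℝ) := by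
      rw [← hsum]
      push_cast
      exact Fin.sum_univ_eq_sum_range (fun i => ((m i : ℝ))) k
    rw [← this]
    exact Finset.sum_congr rfl fun i _ => htr i
  -- hence x s = 1 for all s
  have hxs : ∀ s : Fin n, x s = 1 := by
    have hzero : ∑ s : Fin n, (1 - x s) = 0 := by
      rw [Finset.sum_sub_distrib, hsumx]
      simp
    intro s
    have := (Finset.sum_eq_zero_iff_of_nonneg
      (fun t _ => by linarith [hle t])).mp hzero s (Finset.mem_univ s)
    linarith
  -- kernel membership
  have hker : ∀ s : Fin n, Z *ᵥ w s = 0 := by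
    intro s
    have h0 : star (w s) ⬝ᵥ (Z *ᵥ w s) = 0 := by
      have : star (w s) = w s := by
        funext a; simp
      rw [this, hq s, hxs s]
      ring
    exact (hpsd.dotProduct_mulVec_zero_iff (w s)).mp h0
  constructor
  · intro i s t
    have := congrFun (hker t) (Sum.inl (i, s))
    rw [hmv] at this
    simp only [Pi.zero_apply] at this
    linarith
  · exact hxs
end
end

section
/- Let Z̃ be a symmetric positive semidefinite matrix of order n(k−1)+1 in block form with n×n blocks X_{ij} for i, j ∈ {1, …, k−1} (X_i := X_{ii}, X_{ji} = X_{ij}ᵀ), last column (x_1; …; x_{k−1}; 1), satisfying diag(X_i) = x_i for all i ≤ k−1 and diag(X_{ij}) = 0 for all i ≠ j, i, j ≤ k−1. Then the vector x_k := e_n − x_1 − … − x_{k−1} is entrywise nonnegative. -/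
open Matrix Finset

noncomputable section

/-- for a positive semidefinite matrix `Z̃` of order
`n(k-1) + 1` (indexed here by `(Fin (k-1) × Fin n) ⊕ Unit`, in block form
with blocks `X_{ij}`, last column `(x_1; …; x_{k-1}; 1)`) satisfying
`diag(X_i) = x_i` and `diag(X_{ij}) = 0` for `i ≠ j`, the vector
`x_k := e_n − x_1 − ⋯ − x_{k-1}` is entrywise nonnegative. -/
theorem xk_nonneg_of_reducedSDP
    (n k : ℕ)
    (Z : Matrix ((Fin (k - 1) × Fin n) ⊕ Unit) ((Fin (k - 1) × Fin n) ⊕ Unit) ℝ)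
    (hpsd : Z.PosSemidef)
    (hcorner : Z (Sum.inr ()) (Sum.inr ()) = 1)
    (hdiag : ∀ (i : Fin (k - 1)) (s : Fin n),
      Z (Sum.inl (i, s)) (Sum.inl (i, s)) = Z (Sum.inl (i, s)) (Sum.inr ()))
    (hdiag2 : ∀ (i j : Fin (k - 1)), i ≠ j → ∀ s : Fin n,
      Z (Sum.inl (i, s)) (Sum.inl (j, s)) = 0) :
    ∀ s : Fin n, 0 ≤ 1 - ∑ i : Fin (k - 1), Z (Sum.inl (i, s)) (Sum.inr ()) := by
  intro s
  set v : ((Fin (k - 1) × Fin n) ⊕ Unit) → ℝ := fun x =>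
    match x with
    | Sum.inl (i, t) => if t = s then 1 else 0
    | Sum.inr _ => -1 with hv
  have h := hpsd.dotProduct_mulVec_nonneg v
  have hsym := hpsd.1
  have hq : star v ⬝ᵥ Z *ᵥ v = 1 - ∑ i : Fin (k - 1), Z (Sum.inl (i, s)) (Sum.inr ()) := by
    have hZsym : ∀ a b, Z a b = Z b a := fun a b => by
      have := congrFun (congrFun hsym b) a
      simpa [Matrix.transpose_apply] using this
    simp only [dotProduct, Matrix.mulVec, Pi.star_apply, star_trivial,
      Fintype.sum_sum_type, Fintype.sum_prod_type, hv]
    simp only [mul_ite, mul_one, mul_zero, ite_mul, one_mul, zero_mul,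
      Finset.sum_ite_eq', Finset.mem_univ, if_true, Finset.sum_ite_eq,
      Finset.mul_sum, Finset.sum_neg_distrib]
    have hZ1 : ∀ i : Fin (k-1), ∑ j : Fin (k-1), Z (Sum.inl (i, s)) (Sum.inl (j, s))
        = Z (Sum.inl (i, s)) (Sum.inr ()) := by
      intro i
      rw [Finset.sum_eq_single i]
      · exact hdiag i s
      · intro j _ hj; exact hdiag2 i j (Ne.symm hj) s
      · simp
    simp only [Finset.univ_unique, Finset.sum_singleton, hZ1, hcorner,
      hZsym (Sum.inr ()) ]
    simp
    ring
  rw [hq] at h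
  exact h

end
end

section
/- Let m ∈ ℕ^k with m_i ≥ 1 and Σ_{i=1}^k m_i = n. Let Z̃ be a symmetric positive semidefinite matrix of order n(k−1)+1 in block form with n×n blocks X_{ij} for i, j ∈ {1, …, k−1} (X_i := X_{ii}, X_{ji} = X_{ij}ᵀ) and last column (x_1; …; x_{k−1}; 1), satisfying: diag(X_i) = x_i and trace(X_i) = m_i and ⟨J_n, X_i⟩ = m_i² for i = 1, …, k−1; diag(X_{ij}) = 0 and ⟨J_n, X_{ij} + X_{ij}ᵀ⟩ = 2 m_i m_j for i ≠ j, i, j ≤ k−1. Define x_k := e_n − Σ_{i=1}^{k−1} x_i, X_{ik} := x_i e_nᵀ − X_i − Σ_{j≤k−1, j≠i} X_{ij} for i = 1, …, k−1, X_{ki} := X_{ik}ᵀ, and X_k := x_k e_nᵀ − Σ_{j=1}^{k−1} X_{kj}. Then the completed symmetric matrix Z of order nk+1, with blocks X_{ij} (i, j = 1, …, k) and last column (x_1; …; x_k; 1), is positive semidefinite and satisfies diag(X_i) = x_i and trace(X_i) = m_i and ⟨J_n, X_i⟩ = m_i² for all i = 1, …, k; diag(X_{ij}) = 0 for all i ≠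 j; and ⟨J_n, X_{ij} + X_{ij}ᵀ⟩ = 2 m_i m_j for all i ≠ j. -/
open Matrix Finset

noncomputable section

/-- The reduced SDP matrix `Z̃` of order `n(k-1)+1`, in block form with
`n × n` blocks `X i j` and last column `(x_1; …; x_{k-1}; 1)`. -/
def tildeZ (n k : ℕ)
    (X : Fin (k - 1) → Fin (k - 1) → Matrix (Fin n) (Fin n) ℝ)
    (x : Fin (k - 1) → Fin n → ℝ) :
    Matrix ((Fin (k - 1) × Fin n) ⊕ Unit) ((Fin (k - 1) × Fin n) ⊕ Unit) ℝ :=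
  Matrix.of fun a b =>
    match a, b with
    | Sum.inl (i, s), Sum.inl (j, t) => X i j s t
    | Sum.inl (i, s), Sum.inr _ => x i s
    | Sum.inr _, Sum.inl (j, t) => x j t
    | Sum.inr _, Sum.inr _ => (1 : ℝ)

/-- The completed vector `x_k := e_n − Σ_{i<k} x_i`. -/
def xlast (n k : ℕ) (x : Fin (k - 1) → Fin n → ℝ) : Fin n → ℝ :=
  fun s => 1 - ∑ i : Fin (k - 1), x i s

/-- The completed blocks
`X_{ik} := x_i e_nᵀ − X_i − Σ_{j<k, j≠i} X_{ij} = x_i e_nᵀ − Σ_{j<k} X_{ij}`. -/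
def Xik (n k : ℕ) (X : Fin (k - 1) → Fin (k - 1) → Matrix (Fin n) (Fin n) ℝ)
    (x : Fin (k - 1) → Fin n → ℝ) (i : Fin (k - 1)) : Matrix (Fin n) (Fin n) ℝ :=
  vecMulVec (x i) (fun _ => 1) - ∑ j : Fin (k - 1), X i j

/-- The completed corner block `X_k := x_k e_nᵀ − Σ_{j<k} X_{kj}`,
where `X_{kj} = X_{jk}ᵀ`. -/
def Xlast (n k : ℕ) (X : Fin (k - 1) → Fin (k - 1) → Matrix (Fin n) (Fin n) ℝ)
    (x : Fin (k - 1) → Fin n → ℝ) : Matrix (Fin n) (Fin n) ℝ :=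
  vecMulVec (xlast n k x) (fun _ => 1) - ∑ j : Fin (k - 1), (Xik n k X x j)ᵀ

/-- The full family of vectors `x_1, …, x_k` of the completed matrix. -/
def xfull (n k : ℕ) (x : Fin (k - 1) → Fin n → ℝ) : Fin k → Fin n → ℝ :=
  fun i => if h : (i : ℕ) < k - 1 then x ⟨i, h⟩ else xlast n k x

/-- The full family of blocks `X_{ij}`, `i, j = 1, …, k`, of the completed
matrix. -/
def Xfull (n k : ℕ) (X : Fin (k - 1) → Fin (k - 1) → Matrix (Fin n) (Fin n) ℝ)
    (x : Fin (k - 1) → Fin n → ℝ) : Fin k → Fin k → Matrix (Fin n) (Fin n) ℝ :=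
  fun i j =>
    if hi : (i : ℕ) < k - 1 then
      if hj : (j : ℕ) < k - 1 then X ⟨i, hi⟩ ⟨j, hj⟩ else Xik n k X x ⟨i, hi⟩
    else
      if hj : (j : ℕ) < k - 1 then (Xik n k X x ⟨j, hj⟩)ᵀ else Xlast n k X x

/-- The completed symmetric matrix `Z` of order `nk+1`, with blocks
`X_{ij}` (`i, j = 1, …, k`) and last column `(x_1; …; x_k; 1)`. -/
def completedZ (n k : ℕ)
    (X : Fin (k - 1) → Fin (k - 1) → Matrix (Fin n) (Fin n) ℝ)
    (x : Fin (k - 1) → Fin n → ℝ) :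
    Matrix ((Fin k × Fin n) ⊕ Unit) ((Fin k × Fin n) ⊕ Unit) ℝ :=
  Matrix.of fun a b =>
    match a, b with
    | Sum.inl (i, s), Sum.inl (j, t) => Xfull n k X x i j s t
    | Sum.inl (i, s), Sum.inr _ => xfull n k x i s
    | Sum.inr _, Sum.inl (j, t) => xfull n k x j t
    | Sum.inr _, Sum.inr _ => (1 : ℝ)

/-!
`Z` is the congruence `Aᵀ Z̃ A` by the matrix `A` that keeps the coordinates of the first `k - 1`
blocks and writes those of the `k`-th block as `(last coordinate) − Σ_{i<k} (i-th block)`, exactly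
as `x_k = e_n − Σ_{i<k} x_i`; congruence preserves positive semidefiniteness. For the new blocks the
constraints come from summing the defining identities: the entry sums of `X_{ik}` and `X_k` are
`m_i (n − Σ_{j<k} m_j) = m_i m_k` and `m_k²`, and `diag(X_i) = x_i`, `diag(X_{ij}) = 0` make
`diag(X_{ik})` vanish and `diag(X_k) = x_k`.
-/

lemma sum_sum_add_swap {ι R : Type*} [Fintype ι] [NonAssocSemiring R] (f : ι → ι → R) :
    ∑ s, ∑ t, (f s t + f t s) = 2 * ∑ s, ∑ t, f s t := by
  simp only [Finset.sum_add_distrib, two_mul]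
  rw [Finset.sum_comm (f := fun t s => f s t)]

def completionMatrix (n k : ℕ) :
    Matrix ((Fin (k - 1) × Fin n) ⊕ Unit) ((Fin k × Fin n) ⊕ Unit) ℝ :=
  Matrix.of fun c b =>
    match b with
    | Sum.inl (j, t) =>
        if hj : (j : ℕ) < k - 1 then (if c = Sum.inl (⟨j, hj⟩, t) then 1 else 0)
        else
          match c with
          | Sum.inl (_, s) => if s = t then -1 else 0
          | Sum.inr _ => 1
    | Sum.inr _ => if c = Sum.inr () then 1 else 0

section completionMatrix

variable {n k : ℕ} {α : Type*}
  (M : Matrix α ((Fin (k - 1) × Fin n) ⊕ Unit) ℝ) (c : α)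

lemma mul_completionMatrix_apply_inl (j : Fin k) (t : Fin n) :
    (M * completionMatrix n k) c (Sum.inl (j, t)) =
      if hj : (j : ℕ) < k - 1 then M c (Sum.inl (⟨j, hj⟩, t))
      else M c (Sum.inr ()) - ∑ i : Fin (k - 1), M c (Sum.inl (i, t)) := by
  split_ifs with hj <;>
    simp [mul_apply, completionMatrix, hj, Fintype.sum_prod_type, sub_eq_neg_add]

lemma mul_completionMatrix_apply_inr (u : Unit) :
    (M * completionMatrix n k) c (Sum.inr u) = M c (Sum.inr ()) := by
  simp [mul_apply, completionMatrix]

end completionMatrix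

section completion

variable {n k : ℕ} (X : Fin (k - 1) → Fin (k - 1) → Matrix (Fin n) (Fin n) ℝ)
  (x : Fin (k - 1) → Fin n → ℝ)

lemma Xik_apply (i : Fin (k - 1)) (s t : Fin n) :
    Xik n k X x i s t = x i s - ∑ j : Fin (k - 1), X i j s t := by
  simp [Xik, vecMulVec_apply, Matrix.sum_apply]

lemma Xlast_apply (s t : Fin n) :
    Xlast n k X x s t = xlast n k x s - ∑ j : Fin (k - 1), Xik n k X x j t s := by
  simp [Xlast, vecMulVec_apply, Matrix.sum_apply]

lemma completedZ_eq_transpose_mul_mul (hsym : ∀ i j, (X i j)ᵀ = X j i) :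
    completedZ n k X x =
      (completionMatrix n k)ᵀ * tildeZ n k X x * completionMatrix n k := by
  have hX : ∀ i j s t, X i j t s = X j i s t := fun i j s t => by rw [← hsym]; rfl
  have hXX : ∀ s t, ∑ i, ∑ j, X i j t s = ∑ i, ∑ j, X i j s t := fun s t => by
    rw [Finset.sum_comm]; simp only [hX]
  ext a b
  rw [Matrix.mul_assoc, ← transpose_apply (_ * _), transpose_mul, transpose_transpose]
  rcases a with ⟨i, s⟩ | u <;> rcases b with ⟨j, t⟩ | v <;>
    simp only [mul_completionMatrix_apply_inl, mul_completionMatrix_apply_inr, transpose_apply,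
      completedZ, tildeZ, of_apply, Xfull, xfull] <;>
    split_ifs <;> simp [Xik_apply, Xlast_apply, xlast, hX, hXX]
  ring

variable {X x}

lemma transpose_block_eq_of_isHermitian (h : (tildeZ n k X x).IsHermitian) (i j : Fin (k - 1)) :
    (X i j)ᵀ = X j i := by
  ext s t
  simpa [tildeZ] using (h.apply (Sum.inl (i, t)) (Sum.inl (j, s))).symm

theorem completedZ_posSemidef (hpsd : (tildeZ n k X x).PosSemidef) :
    (completedZ n k X x).PosSemidef := by
  rw [completedZ_eq_transpose_mul_mul X x (transpose_block_eq_of_isHermitian hpsd.isHermitian),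
    ← conjTranspose_eq_transpose_of_trivial]
  exact hpsd.conjTranspose_mul_mul_same _

variable {c : Fin (k - 1) → ℝ}

lemma sum_xlast_eq (hx : ∀ i, ∑ s, x i s = c i) : ∑ s, xlast n k x s = n - ∑ i, c i := by
  simp [xlast, Finset.sum_comm (γ := Fin n), hx]

lemma sum_sum_Xik_eq (hx : ∀ i, ∑ s, x i s = c i)
    (hX : ∀ i j, ∑ s, ∑ t, X i j s t = c i * c j) (i : Fin (k - 1)) :
    ∑ s, ∑ t, Xik n k X x i s t = c i * (n - ∑ j, c j) := by
  simp [Xik_apply, ← Finset.mul_sum, Finset.sum_comm (t := (univ : Finset (Fin (k - 1)))), hx, hX]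
  ring

lemma sum_sum_Xlast_eq (hx : ∀ i, ∑ s, x i s = c i)
    (hX : ∀ i j, ∑ s, ∑ t, X i j s t = c i * c j) :
    ∑ s, ∑ t, Xlast n k X x s t = (n - ∑ j, c j) ^ 2 := by
  have hXik : ∀ j, ∑ s, ∑ t, Xik n k X x j t s = c j * (n - ∑ j, c j) := fun j =>
    Finset.sum_comm.trans (sum_sum_Xik_eq hx hX j)
  simp [Xlast_apply, ← Finset.mul_sum, Finset.sum_comm (t := (univ : Finset (Fin (k - 1)))),
    sum_xlast_eq hx, hXik, ← Finset.sum_mul]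
  ring

lemma Xik_apply_self_eq_zero (hdiag : ∀ i s, X i i s s = x i s)
    (hdiag2 : ∀ i j, i ≠ j → ∀ s, X i j s s = 0) (i : Fin (k - 1)) (s : Fin n) :
    Xik n k X x i s s = 0 := by
  rw [Xik_apply, Finset.sum_eq_single i (fun j _ hj => hdiag2 i j hj.symm s) (by simp), hdiag,
    sub_self]

lemma Xfull_apply_self_self (hdiag : ∀ i s, X i i s s = x i s)
    (hdiag2 : ∀ i j, i ≠ j → ∀ s, X i j s s = 0) (i : Fin k) (s : Fin n) :
    Xfull n k X x i i s s = xfull n k x i s := by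
  by_cases hi : (i : ℕ) < k - 1
  · simp [Xfull, xfull, hi, hdiag]
  · simp [Xfull, xfull, hi, Xlast_apply, Xik_apply_self_eq_zero hdiag hdiag2]

lemma Xfull_apply_self_of_ne (hdiag : ∀ i s, X i i s s = x i s)
    (hdiag2 : ∀ i j, i ≠ j → ∀ s, X i j s s = 0) {i j : Fin k} (hij : i ≠ j) (s : Fin n) :
    Xfull n k X x i j s s = 0 := by
  rw [Ne, Fin.ext_iff] at hij
  by_cases hi : (i : ℕ) < k - 1 <;> by_cases hj : (j : ℕ) < k - 1
  · simpa [Xfull, hi, hj] using hdiag2 ⟨i, hi⟩ ⟨j, hj⟩ (by simpa [Fin.ext_iff] using hij) s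
  · simpa [Xfull, hi, hj] using Xik_apply_self_eq_zero hdiag hdiag2 ⟨i, hi⟩ s
  · simpa [Xfull, hi, hj] using Xik_apply_self_eq_zero hdiag hdiag2 ⟨j, hj⟩ s
  · omega

lemma cast_eq_sub_sum_of_not_lt {m : ℕ → ℕ} (hsum : ∑ i ∈ range k, m i = n) {i : Fin k}
    (hi : ¬ (i : ℕ) < k - 1) : (m i : ℝ) = n - ∑ j : Fin (k - 1), (m j : ℝ) := by
  have hik : (i : ℕ) = k - 1 := by omega
  obtain ⟨k, rfl⟩ : ∃ k', k = k' + 1 := ⟨k - 1, by omega⟩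
  simp [← hsum, Fin.sum_univ_eq_sum_range (fun j => (m j : ℝ)), hik, Finset.sum_range_succ]

lemma sum_xfull {m : ℕ → ℕ} (hsum : ∑ i ∈ range k, m i = n) (hx : ∀ i, ∑ s, x i s = m i)
    (i : Fin k) : ∑ s, xfull n k x i s = m i := by
  by_cases hi : (i : ℕ) < k - 1
  · simp [xfull, hi, hx]
  · simp [xfull, hi, sum_xlast_eq hx, cast_eq_sub_sum_of_not_lt hsum hi]

lemma sum_sum_Xfull {m : ℕ → ℕ} (hsum : ∑ i ∈ range k, m i = n) (hx : ∀ i, ∑ s, x i s = m i)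
    (hX : ∀ i j, ∑ s, ∑ t, X i j s t = m i * m j) (i j : Fin k) :
    ∑ s, ∑ t, Xfull n k X x i j s t = m i * m j := by
  by_cases hi : (i : ℕ) < k - 1 <;> by_cases hj : (j : ℕ) < k - 1
  · simp [Xfull, hi, hj, hX]
  · simp [Xfull, hi, hj, sum_sum_Xik_eq hx hX, cast_eq_sub_sum_of_not_lt hsum hj]
  · simp [Xfull, hi, hj, Finset.sum_comm (γ := Fin n), sum_sum_Xik_eq hx hX,
      cast_eq_sub_sum_of_not_lt hsum hi, mul_comm]
  · simp [Xfull, hi, hj, sum_sum_Xlast_eq hx hX, cast_eq_sub_sum_of_not_lt hsum hi,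
      cast_eq_sub_sum_of_not_lt hsum hj, sq]

end completion

theorem completedZ_posSemidef_and_constraints_general
    (n k : ℕ) (m : ℕ → ℕ)
    (X : Fin (k - 1) → Fin (k - 1) → Matrix (Fin n) (Fin n) ℝ)
    (x : Fin (k - 1) → Fin n → ℝ)
    (hsum : ∑ i ∈ Finset.range k, m i = n)
    (hpsd : (tildeZ n k X x).PosSemidef)
    (hdiag : ∀ (i : Fin (k - 1)) (s : Fin n), X i i s s = x i s)
    (htr : ∀ i : Fin (k - 1), ∑ s : Fin n, X i i s s = (m i : ℝ))
    (hJ : ∀ i : Fin (k - 1), ∑ s : Fin n, ∑ t : Fin n, X i i s t = (m i : ℝ) ^ 2)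
    (hdiag2 : ∀ (i j : Fin (k - 1)), i ≠ j → ∀ s : Fin n, X i j s s = 0)
    (hJ2 : ∀ (i j : Fin (k - 1)), i ≠ j →
      ∑ s : Fin n, ∑ t : Fin n, (X i j s t + X i j t s) = 2 * (m i : ℝ) * (m j : ℝ)) :
    (completedZ n k X x).PosSemidef ∧
    (∀ (i : Fin k) (s : Fin n), Xfull n k X x i i s s = xfull n k x i s) ∧
    (∀ i : Fin k, ∑ s : Fin n, Xfull n k X x i i s s = (m i : ℝ)) ∧
    (∀ i : Fin k, ∑ s : Fin n, ∑ t : Fin n, Xfull n k X x i i s t = (m i : ℝ) ^ 2) ∧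
    (∀ (i j : Fin k), i ≠ j → ∀ s : Fin n, Xfull n k X x i j s s = 0) ∧
    (∀ (i j : Fin k), i ≠ j →
      ∑ s : Fin n, ∑ t : Fin n, (Xfull n k X x i j s t + Xfull n k X x i j t s) =
        2 * (m i : ℝ) * (m j : ℝ)) := by
  have hx : ∀ i, ∑ s, x i s = m i := fun i => by simpa [hdiag] using htr i
  have hX : ∀ i j, ∑ s, ∑ t, X i j s t = m i * m j := by
    intro i j
    rcases eq_or_ne i j with rfl | hij
    · rw [hJ, sq]
    · linarith [hJ2 i j hij, sum_sum_add_swap (X i j)]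
  refine ⟨completedZ_posSemidef hpsd, Xfull_apply_self_self hdiag hdiag2, fun i => ?_,
    fun i => ?_, fun i j hij => Xfull_apply_self_of_ne hdiag hdiag2 hij, fun i j _ => ?_⟩
  · simp only [Xfull_apply_self_self hdiag hdiag2, sum_xfull hsum hx]
  · rw [sum_sum_Xfull hsum hx hX, sq]
  · rw [sum_sum_add_swap (Xfull n k X x i j), sum_sum_Xfull hsum hx hX, mul_assoc]

/-- Lemma 3 of the paper: the completed matrix `Z` of order
`nk+1` is positive semidefinite and satisfies all the constraints of the
full lifted SDP model. -/
theorem completedZ_posSemidef_and_constraints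
    (n k : ℕ) (m : ℕ → ℕ)
    (X : Fin (k - 1) → Fin (k - 1) → Matrix (Fin n) (Fin n) ℝ)
    (x : Fin (k - 1) → Fin n → ℝ)
    (hm : ∀ i < k, 1 ≤ m i) (hsum : ∑ i ∈ Finset.range k, m i = n)
    (hpsd : (tildeZ n k X x).PosSemidef)
    (hdiag : ∀ (i : Fin (k - 1)) (s : Fin n), X i i s s = x i s)
    (htr : ∀ i : Fin (k - 1), ∑ s : Fin n, X i i s s = (m i : ℝ))
    (hJ : ∀ i : Fin (k - 1), ∑ s : Fin n, ∑ t : Fin n, X i i s t = (m i : ℝ) ^ 2)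
    (hdiag2 : ∀ (i j : Fin (k - 1)), i ≠ j → ∀ s : Fin n, X i j s s = 0)
    (hJ2 : ∀ (i j : Fin (k - 1)), i ≠ j →
      ∑ s : Fin n, ∑ t : Fin n, (X i j s t + X i j t s) = 2 * (m i : ℝ) * (m j : ℝ)) :
    (completedZ n k X x).PosSemidef ∧
    (∀ (i : Fin k) (s : Fin n), Xfull n k X x i i s s = xfull n k x i s) ∧
    (∀ i : Fin k, ∑ s : Fin n, Xfull n k X x i i s s = (m i : ℝ)) ∧
    (∀ i : Fin k, ∑ s : Fin n, ∑ t : Fin n, Xfull n k X x i i s t = (m i : ℝ) ^ 2) ∧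
    (∀ (i j : Fin k), i ≠ j → ∀ s : Fin n, Xfull n k X x i j s s = 0) ∧
    (∀ (i j : Fin k), i ≠ j →
      ∑ s : Fin n, ∑ t : Fin n, (Xfull n k X x i j s t + Xfull n k X x i j t s) =
        2 * (m i : ℝ) * (m j : ℝ)) :=
  completedZ_posSemidef_and_constraints_general n k m X x hsum hpsd hdiag htr hJ hdiag2 hJ2

end
end

section
/- Let 3 ≤ k ≤ n, m ∈ ℕ^k with m_i ≥ 1 and Σ_{i=1}^k m_i = n, and 1 ≤ r ≤ k−2. Let X̄ be the basic partition matrix. If the (i,j) entry of X̄ B_{r,k} X̄ᵀ equals 1, then |i − j| > min{ m_2 + … + m_{r+1}, m_3 + … + m_{r+2}, …, m_{k−r} + … + m_{k−1} }. -/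
open Matrix Finset

attribute [local instance] Classical.propDecidable

noncomputable section

lemma block_exists (k : ℕ) (m : ℕ → ℕ) (hk : 0 < k) (i : ℕ)
    (hi : i < ∑ l ∈ Finset.range k, m l) :
    ∃ u : Fin k, (∑ l ∈ Finset.range (u : ℕ), m l) ≤ i ∧
      i < ∑ l ∈ Finset.range ((u : ℕ) + 1), m l := by
  have hP : ∃ t, i < ∑ l ∈ Finset.range (t + 1), m l :=
    ⟨k - 1, by rwa [Nat.sub_add_cancel hk]⟩
  classical
  set u := Nat.find hP with hu
  have hfind := Nat.find_spec hP
  have hule : u ≤ k - 1 := Nat.find_le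
    (show i < ∑ l ∈ Finset.range (k - 1 + 1), m l by rwa [Nat.sub_add_cancel hk])
  have huk : u < k := lt_of_le_of_lt hule (by omega)
  refine ⟨⟨u, huk⟩, ?_, hfind⟩
  rcases Nat.eq_zero_or_pos u with h0 | hpos
  · simp [h0]
  · have := Nat.find_min hP (show u - 1 < u by omega)
    simpa [Nat.sub_add_cancel hpos] using this

lemma block_unique (k : ℕ) (m : ℕ → ℕ) (i : ℕ) (u v : Fin k)
    (hu1 : (∑ l ∈ Finset.range (u : ℕ), m l) ≤ i)
    (hu2 : i < ∑ l ∈ Finset.range ((u : ℕ) + 1), m l)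
    (hv1 : (∑ l ∈ Finset.range (v : ℕ), m l) ≤ i)
    (hv2 : i < ∑ l ∈ Finset.range ((v : ℕ) + 1), m l) : u = v := by
  have mono : ∀ a b : ℕ, a ≤ b →
      (∑ l ∈ Finset.range a, m l) ≤ ∑ l ∈ Finset.range b, m l := fun a b h =>
    Finset.sum_le_sum_of_subset (Finset.range_subset_range.2 h)
  by_contra hne
  rcases lt_or_gt_of_ne (fun h : (u : ℕ) = (v : ℕ) => hne (Fin.ext h)) with h | h
  · exact absurd (le_trans (mono _ _ h) hv1) (not_le.2 hu2)
  · exact absurd (le_trans (mono _ _ h) hu1) (not_le.2 hv2)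

lemma entry_eq (n k r : ℕ) (m : ℕ → ℕ) (i j : Fin n) (u v : Fin k)
    (hu1 : (∑ l ∈ Finset.range (u : ℕ), m l) ≤ (i : ℕ))
    (hu2 : (i : ℕ) < ∑ l ∈ Finset.range ((u : ℕ) + 1), m l)
    (hv1 : (∑ l ∈ Finset.range (v : ℕ), m l) ≤ (j : ℕ))
    (hv2 : (j : ℕ) < ∑ l ∈ Finset.range ((v : ℕ) + 1), m l) :
    (basicPartition n k m * Bmat k r * (basicPartition n k m)ᵀ) i j = Bmat k r u v := by
  classical
  have hXi : ∀ w : Fin k, basicPartition n k m i w = if w = u then 1 else 0 := by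
    intro w
    by_cases hw : w = u
    · subst hw; simp [basicPartition, hu1, hu2]
    · simp only [basicPartition, Matrix.of_apply, if_neg hw]
      rw [if_neg]
      intro hcond
      exact hw (block_unique k m (i : ℕ) w u hcond.1 hcond.2 hu1 hu2)
  have hXj : ∀ w : Fin k, basicPartition n k m j w = if w = v then 1 else 0 := by
    intro w
    by_cases hw : w = v
    · subst hw; simp [basicPartition, hv1, hv2]
    · simp only [basicPartition, Matrix.of_apply, if_neg hw]
      rw [if_neg]
      intro hcond
      exact hw (block_unique k m (j : ℕ) w v hcond.1 hcond.2 hv1 hv2)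
  simp [Matrix.mul_apply, Matrix.transpose_apply, hXi, hXj, ite_mul, mul_ite,
    Finset.sum_ite_eq, Finset.sum_ite_eq']

lemma key_ineq (k r : ℕ) (m : ℕ → ℕ) (i j u v : ℕ)
    (hv : v < k) (huv : u + r < v)
    (hi : i < ∑ l ∈ Finset.range (u + 1), m l)
    (hj : (∑ l ∈ Finset.range v, m l) ≤ j) :
    sInf {s : ℕ | ∃ t, 1 ≤ t ∧ t ≤ k - r - 1 ∧ s = ∑ l ∈ Finset.Ico t (t + r), m l} + i
      < j := by
  set s := ∑ l ∈ Finset.Ico (u + 1) (u + 1 + r), m l with hs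
  have hmem : s ∈ {s : ℕ | ∃ t, 1 ≤ t ∧ t ≤ k - r - 1 ∧
      s = ∑ l ∈ Finset.Ico t (t + r), m l} := ⟨u + 1, by omega, by omega, rfl⟩
  have hsle := Nat.sInf_le hmem
  have hcons : (∑ l ∈ Finset.range (u + 1), m l) + s = ∑ l ∈ Finset.range (u + 1 + r), m l := by
    rw [Finset.range_eq_Ico, Finset.range_eq_Ico]
    exact Finset.sum_Ico_consecutive m (Nat.zero_le (u + 1)) (Nat.le_add_right (u + 1) r)
  have hmono : (∑ l ∈ Finset.range (u + 1 + r), m l) ≤ ∑ l ∈ Finset.range v, m l :=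
    Finset.sum_le_sum_of_subset (Finset.range_subset_range.2 (by omega))
  omega

/-- nonzero entries of `X̄ B_{r,k} X̄ᵀ` are farther from the
main diagonal than `min{ m_2 + ⋯ + m_{r+1}, …, m_{k-r} + ⋯ + m_{k-1} }`
(0-indexed block sizes `m 0, …, m (k-1)`). -/
theorem basicPartition_entry_one_far_from_diagonal
    (n k r : ℕ) (m : ℕ → ℕ) (hk3 : 3 ≤ k) (hkn : k ≤ n)
    (hm : ∀ i < k, 1 ≤ m i) (hsum : ∑ i ∈ Finset.range k, m i = n)
    (hr1 : 1 ≤ r) (hrk : r ≤ k - 2) (i j : Fin n)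
    (h1 : (basicPartition n k m * Bmat k r * (basicPartition n k m)ᵀ) i j = 1) :
    sInf {s : ℕ | ∃ t, 1 ≤ t ∧ t ≤ k - r - 1 ∧ s = ∑ l ∈ Finset.Ico t (t + r), m l} <
      (((i : ℕ) : ℤ) - ((j : ℕ) : ℤ)).natAbs := by
  have hk0 : 0 < k := by omega
  obtain ⟨u, hu1, hu2⟩ := block_exists k m hk0 (i : ℕ) (by rw [hsum]; exact i.2)
  obtain ⟨v, hv1, hv2⟩ := block_exists k m hk0 (j : ℕ) (by rw [hsum]; exact j.2)
  rw [entry_eq n k r m i j u v hu1 hu2 hv1 hv2] at h1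
  have hB : (r : ℤ) < |((u : ℕ) : ℤ) - ((v : ℕ) : ℤ)| := by
    by_contra hc
    simp [Bmat, hc] at h1
  have habs : (u : ℕ) + r < (v : ℕ) ∨ (v : ℕ) + r < (u : ℕ) := by
    rcases abs_cases (((u : ℕ) : ℤ) - ((v : ℕ) : ℤ)) with ⟨h, _⟩ | ⟨h, _⟩ <;>
      rw [h] at hB <;> omega
  rcases habs with h | h
  · have := key_ineq k r m (i : ℕ) (j : ℕ) (u : ℕ) (v : ℕ) v.2 h hu2 hv1
    omega
  · have := key_ineq k r m (j : ℕ) (i : ℕ) (v : ℕ) (u : ℕ) u.2 h hv2 hu1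
    omega

end
end

section
/- Let 3 ≤ k ≤ n, m ∈ ℕ^k with m_i ≥ 1 and Σ_{i=1}^k m_i = n, and 1 ≤ r ≤ k−2. Let X̄ be the basic partition matrix. If i, j ∈ {1,…,n} satisfy |i − j| ≥ max{ m_1 + m_2 + … + m_{r+1}, m_2 + m_3 + … + m_{r+2}, …, m_{k−r} + … + m_k }, then the (i,j) entry of X̄ B_{r,k} X̄ᵀ equals 1. -/
open Matrix Finset

attribute [local instance] Classical.propDecidable

noncomputable section

/-- Auxiliary: monotonicity of partial sums. -/
lemma sumRange_mono (m : ℕ → ℕ) {a b : ℕ} (hab : a ≤ b) :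
    (∑ l ∈ Finset.range a, m l) ≤ ∑ l ∈ Finset.range b, m l :=
  Finset.sum_le_sum_of_subset (Finset.range_subset_range.2 hab)

/-- Auxiliary: every element of `Fin n` lies in some block. -/
lemma exists_block (n k : ℕ) (m : ℕ → ℕ) (hk : 0 < k)
    (hsum : ∑ l ∈ Finset.range k, m l = n) (i : Fin n) :
    ∃ u : Fin k, (∑ l ∈ Finset.range (u : ℕ), m l) ≤ (i : ℕ) ∧
      (i : ℕ) < ∑ l ∈ Finset.range ((u : ℕ) + 1), m l := by
  classical
  set P : ℕ → Prop := fun t => (∑ l ∈ Finset.range t, m l) ≤ (i : ℕ) with hP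
  have hPk : ¬ P k := by
    simp only [P, hsum]
    exact Nat.not_le.2 i.2
  set u := Nat.findGreatest P k with hu
  have hiff := (Nat.findGreatest_eq_iff (P := P) (k := k) (m := u)).1 rfl
  have huk : u < k := lt_of_le_of_ne hiff.1 (by
    intro he
    rcases Nat.eq_zero_or_pos u with h0 | h0
    · omega
    · exact hPk (he ▸ hiff.2.1 (by omega)))
  refine ⟨⟨u, huk⟩, ?_, ?_⟩
  · rcases Nat.eq_zero_or_pos u with h0 | h0
    · simp [h0]
    · exact hiff.2.1 (by omega)
  · have := hiff.2.2 (n := u + 1) (by omega) (by omega)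
    simpa [P] using Nat.lt_of_not_le this

/-- entries of `X̄ B_{r,k} X̄ᵀ` at distance at least
`max{ m_1 + ⋯ + m_{r+1}, …, m_{k-r} + ⋯ + m_k }` from the main diagonal
are equal to `1` (0-indexed block sizes `m 0, …, m (k-1)`). -/
theorem basicPartition_entry_one_of_far_from_diagonal
    (n k r : ℕ) (m : ℕ → ℕ) (hk3 : 3 ≤ k) (hkn : k ≤ n)
    (hm : ∀ i < k, 1 ≤ m i) (hsum : ∑ i ∈ Finset.range k, m i = n)
    (hr1 : 1 ≤ r) (hrk : r ≤ k - 2) (i j : Fin n)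
    (h : sSup {s : ℕ | ∃ t, t ≤ k - r - 1 ∧ s = ∑ l ∈ Finset.Ico t (t + r + 1), m l} ≤
      (((i : ℕ) : ℤ) - ((j : ℕ) : ℤ)).natAbs) :
    (basicPartition n k m * Bmat k r * (basicPartition n k m)ᵀ) i j = 1 := by
  classical
  have hk0 : 0 < k := by omega
  obtain ⟨u, hu1, hu2⟩ := exists_block n k m hk0 hsum i
  obtain ⟨v, hv1, hv2⟩ := exists_block n k m hk0 hsum j
  have huniq : ∀ (x : Fin n) (w w' : Fin k),
      ((∑ l ∈ Finset.range (w : ℕ), m l) ≤ (x : ℕ) ∧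
        (x : ℕ) < ∑ l ∈ Finset.range ((w : ℕ) + 1), m l) →
      ((∑ l ∈ Finset.range (w' : ℕ), m l) ≤ (x : ℕ) ∧
        (x : ℕ) < ∑ l ∈ Finset.range ((w' : ℕ) + 1), m l) → w = w' := by
    intro x w w' hw hw'
    by_contra hne
    rcases Nat.lt_or_ge (w : ℕ) (w' : ℕ) with hlt | hge
    · have := sumRange_mono m (show (w : ℕ) + 1 ≤ (w' : ℕ) by omega)
      omega
    · have hlt : (w' : ℕ) < (w : ℕ) :=
        lt_of_le_of_ne hge (fun he => hne (Fin.ext he.symm))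
      have := sumRange_mono m (show (w' : ℕ) + 1 ≤ (w : ℕ) by omega)
      omega
  have hXi : ∀ w : Fin k, basicPartition n k m i w = if w = u then 1 else 0 := by
    intro w
    by_cases hw : w = u
    · subst hw; simp [basicPartition, hu1, hu2]
    · have hc : ¬ ((∑ l ∈ Finset.range (w : ℕ), m l) ≤ (i : ℕ) ∧
          (i : ℕ) < ∑ l ∈ Finset.range ((w : ℕ) + 1), m l) :=
        fun hc => hw (huniq i w u hc ⟨hu1, hu2⟩)
      simp [basicPartition, hc, hw]
  have hXj : ∀ w : Fin k, basicPartition n k m j w = if w = v then 1 else 0 := by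
    intro w
    by_cases hw : w = v
    · subst hw; simp [basicPartition, hv1, hv2]
    · have hc : ¬ ((∑ l ∈ Finset.range (w : ℕ), m l) ≤ (j : ℕ) ∧
          (j : ℕ) < ∑ l ∈ Finset.range ((w : ℕ) + 1), m l) :=
        fun hc => hw (huniq j w v hc ⟨hv1, hv2⟩)
      simp [basicPartition, hc, hw]
  have hentry : (basicPartition n k m * Bmat k r * (basicPartition n k m)ᵀ) i j
      = Bmat k r u v := by
    simp [Matrix.mul_apply, Matrix.transpose_apply, hXi, hXj, ite_mul, mul_ite,
      Finset.sum_ite_eq', one_mul, zero_mul, mul_one, mul_zero]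
  rw [hentry]
  have hfar : (r : ℤ) < |((u : ℕ) : ℤ) - ((v : ℕ) : ℤ)| := by
    by_contra habs
    push_neg at habs
    rw [abs_le] at habs
    set t0 := min (min (u : ℕ) (v : ℕ)) (k - r - 1) with ht0
    have hukv : (u : ℕ) < k := u.2
    have hvkv : (v : ℕ) < k := v.2
    have ht0le : t0 ≤ k - r - 1 := by omega
    have hule : (u : ℕ) + 1 ≤ t0 + r + 1 := by omega
    have hvle : (v : ℕ) + 1 ≤ t0 + r + 1 := by omega
    have hbdd : BddAbove {s : ℕ | ∃ t, t ≤ k - r - 1 ∧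
        s = ∑ l ∈ Finset.Ico t (t + r + 1), m l} := by
      refine ⟨∑ l ∈ Finset.range k, m l, ?_⟩
      rintro s ⟨t, ht, rfl⟩
      apply Finset.sum_le_sum_of_subset
      intro x hx
      simp only [Finset.mem_Ico, Finset.mem_range] at hx ⊢
      omega
    have hmem : (∑ l ∈ Finset.Ico t0 (t0 + r + 1), m l) ∈ {s : ℕ | ∃ t, t ≤ k - r - 1 ∧
        s = ∑ l ∈ Finset.Ico t (t + r + 1), m l} := ⟨t0, ht0le, rfl⟩
    have hle : (∑ l ∈ Finset.Ico t0 (t0 + r + 1), m l) ≤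
        (((i : ℕ) : ℤ) - ((j : ℕ) : ℤ)).natAbs :=
      le_trans (le_csSup hbdd hmem) h
    have hsplit : (∑ l ∈ Finset.range (t0 + r + 1), m l)
        = (∑ l ∈ Finset.range t0, m l) + ∑ l ∈ Finset.Ico t0 (t0 + r + 1), m l := by
      rw [Finset.range_eq_Ico,
        ← Finset.sum_Ico_consecutive m (Nat.zero_le t0) (show t0 ≤ t0 + r + 1 by omega), ← Finset.range_eq_Ico]
    have h1 : (∑ l ∈ Finset.range t0, m l) ≤ (i : ℕ) :=
      le_trans (sumRange_mono m (by omega)) hu1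
    have h2 : (∑ l ∈ Finset.range t0, m l) ≤ (j : ℕ) :=
      le_trans (sumRange_mono m (by omega)) hv1
    have h3 : (i : ℕ) < ∑ l ∈ Finset.range (t0 + r + 1), m l :=
      lt_of_lt_of_le hu2 (sumRange_mono m hule)
    have h4 : (j : ℕ) < ∑ l ∈ Finset.range (t0 + r + 1), m l :=
      lt_of_lt_of_le hv2 (sumRange_mono m hvle)
    omega
  simp [Bmat, hfar]


end
end
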